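/- arXiv:2212.09669 — 5 statements merged into one kernel-verified Lean document; each statement's English description precedes it below -/
import Mathlib

section
/- Let F = {X; f₁,…,f_N} and G = {Y; g₁,…,g_N} be two iterated function systems with attractors A_F and A_G, and let H = {X × Y; h₁,…,h_N} with h_i(x,y) = (f_i(x), g_i(y)) with attractor A_H. Then the graph of the fractal transformation T_{FG} = φ_G ∘ τ_F is contained in A_H, and consequently dim_H A_F ≤ dim_H(graph T_{FG}) ≤ dim_H A_H. -/
open Metric

/-- the graph of the fractal transformation `T_{FG} = φ_G ∘ τ_F`
is contained in the attractor `A_H` of the product IFS, and consequently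
`dimH A_F ≤ dimH (graph T_{FG}) ≤ dimH A_H`. -/
theorem stmt1 {X Y : Type*} [MetricSpace X] [CompleteSpace X]
    [MetricSpace Y] [CompleteSpace Y] {N : ℕ}
    (f : Fin N → X → X) (g : Fin N → Y → Y)
    (cf cg : Fin N → NNReal) (hcf : ∀ i, cf i < 1) (hcg : ∀ i, cg i < 1)
    (hf : ∀ i, LipschitzWith (cf i) (f i)) (hg : ∀ i, LipschitzWith (cg i) (g i))
    (AF : Set X) (hAF : IsCompact AF ∧ AF.Nonempty ∧ AF = ⋃ i, f i '' AF)
    (AG : Set Y) (hAG : IsCompact AG ∧ AG.Nonempty ∧ AG = ⋃ i, g i '' AG)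
    (AH : Set (X × Y)) (hAH : IsCompact AH ∧ AH.Nonempty ∧
      AH = ⋃ i, (fun p : X × Y => (f i p.1, g i p.2)) '' AH)
    -- address maps of `F` and `G`
    (φF : (ℕ → Fin N) → X) (φG : (ℕ → Fin N) → Y)
    (hφF : ∀ σ, φF σ = f (σ 0) (φF fun k => σ (k + 1)))
    (hφG : ∀ σ, φG σ = g (σ 0) (φG fun k => σ (k + 1)))
    (hrF : Set.range φF = AF) (hrG : Set.range φG = AG)
    -- tops function of `F`
    (τF : X → ℕ → Fin N) (hτ : ∀ x ∈ AF, φF (τF x) = x)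
    -- the fractal transformation
    (T : X → Y) (hT : ∀ x, T x = φG (τF x)) :
    {p : X × Y | p.1 ∈ AF ∧ p.2 = T p.1} ⊆ AH ∧
    dimH AF ≤ dimH {p : X × Y | p.1 ∈ AF ∧ p.2 = T p.1} ∧
    dimH {p : X × Y | p.1 ∈ AF ∧ p.2 = T p.1} ≤ dimH AH := by
  obtain ⟨hAHc, ⟨p₀, hp₀⟩, hAHeq⟩ := hAH
  obtain ⟨hAFc, hAFne, hAFeq⟩ := hAF
  obtain ⟨hAGc, hAGne, hAGeq⟩ := hAG
  -- `Fin N` is nonempty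
  have hN : Nonempty (Fin N) := by
    obtain ⟨x, hx⟩ := hAFne
    rw [hAFeq] at hx
    obtain ⟨i, -⟩ := Set.mem_iUnion.1 hx
    exact ⟨i⟩
  -- uniform contraction ratio
  set r : NNReal := Finset.univ.sup (fun i : Fin N => max (cf i) (cg i)) with hr
  have hr1 : r < 1 := by
    have : ∀ i ∈ Finset.univ, max (cf i) (cg i) < 1 := fun i _ => max_lt (hcf i) (hcg i)
    exact (Finset.sup_lt_iff (show (⊥ : NNReal) < 1 by norm_num)).2 this
  -- each product map is LipschitzWith r
  have hlip : ∀ i : Fin N,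
      LipschitzWith r (fun p : X × Y => (f i p.1, g i p.2)) := by
    intro i
    have : LipschitzWith (max (cf i * 1) (cg i * 1))
        (fun p : X × Y => (f i p.1, g i p.2)) :=
      ((hf i).comp LipschitzWith.prod_fst).prodMk ((hg i).comp LipschitzWith.prod_snd)
    refine this.weaken ?_
    simp only [mul_one]
    exact Finset.le_sup (f := fun i : Fin N => max (cf i) (cg i)) (Finset.mem_univ i)
  -- `h i` maps AH into AH
  have hmaps : ∀ i : Fin N, ∀ p ∈ AH, (f i p.1, g i p.2) ∈ AH := by
    intro i p hp
    rw [hAHeq]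
    exact Set.mem_iUnion.2 ⟨i, Set.mem_image_of_mem _ hp⟩
  -- a uniform bound
  obtain ⟨C₁, hC₁⟩ := hAFc.isBounded.subset_closedBall p₀.1
  obtain ⟨C₂, hC₂⟩ := hAGc.isBounded.subset_closedBall p₀.2
  set C : ℝ := max C₁ C₂ with hC
  have hbound : ∀ σ : ℕ → Fin N, dist (φF σ, φG σ) p₀ ≤ C := by
    intro σ
    rw [Prod.dist_eq]
    have h1 : φF σ ∈ AF := hrF ▸ Set.mem_range_self σ
    have h2 : φG σ ∈ AG := hrG ▸ Set.mem_range_self σ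
    exact max_le_max (hC₁ h1) (hC₂ h2)
  -- iterated approximants
  let Fk : ℕ → (ℕ → Fin N) → X × Y := fun k =>
    Nat.rec (fun _ => p₀)
      (fun _ ih σ => (f (σ 0) (ih fun n => σ (n + 1)).1,
        g (σ 0) (ih fun n => σ (n + 1)).2)) k
  have hFk0 : ∀ σ, Fk 0 σ = p₀ := fun _ => rfl
  have hFkS : ∀ k σ, Fk (k + 1) σ =
      (f (σ 0) (Fk k fun n => σ (n + 1)).1, g (σ 0) (Fk k fun n => σ (n + 1)).2) :=
    fun _ _ => rfl
  have hmem : ∀ k σ, Fk k σ ∈ AH := by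
    intro k
    induction k with
    | zero => intro σ; exact hp₀
    | succ k ih =>
      intro σ
      rw [hFkS]
      exact hmaps _ _ (ih _)
  have hdist : ∀ k σ, dist (φF σ, φG σ) (Fk k σ) ≤ (r : ℝ) ^ k * C := by
    intro k
    induction k with
    | zero =>
      intro σ
      simpa [hFk0] using hbound σ
    | succ k ih =>
      intro σ
      rw [hFkS]
      have key : ((φF σ, φG σ) : X × Y) =
          (f (σ 0) (φF fun n => σ (n + 1)), g (σ 0) (φG fun n => σ (n + 1))) := by
        rw [← hφF, ← hφG]
      rw [key]
      calc dist ((f (σ 0) (φF fun n => σ (n + 1)), g (σ 0) (φG fun n => σ (n + 1))) : X × Y)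
            (f (σ 0) (Fk k fun n => σ (n + 1)).1, g (σ 0) (Fk k fun n => σ (n + 1)).2)
          ≤ r * dist ((φF fun n => σ (n + 1), φG fun n => σ (n + 1)) : X × Y)
              (Fk k fun n => σ (n + 1)) :=
            (hlip (σ 0)).dist_le_mul (φF fun n => σ (n + 1), φG fun n => σ (n + 1))
              (Fk k fun n => σ (n + 1))
        _ ≤ r * ((r : ℝ) ^ k * C) := by
            exact mul_le_mul_of_nonneg_left (ih _) r.coe_nonneg
        _ = (r : ℝ) ^ (k + 1) * C := by ring
  -- range of the combined address map lies in AH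
  have hφH : ∀ σ : ℕ → Fin N, ((φF σ, φG σ) : X × Y) ∈ AH := by
    intro σ
    have hb : Filter.Tendsto (fun k => (r : ℝ) ^ k * C) Filter.atTop (nhds 0) := by
      have h0 : Filter.Tendsto (fun k => (r : ℝ) ^ k) Filter.atTop (nhds 0) :=
        tendsto_pow_atTop_nhds_zero_of_lt_one r.coe_nonneg (by exact_mod_cast hr1)
      simpa using h0.mul_const C
    have htend : Filter.Tendsto (fun k => Fk k σ) Filter.atTop (nhds (φF σ, φG σ)) := by
      rw [tendsto_iff_dist_tendsto_zero]
      refine squeeze_zero (fun k => dist_nonneg) (fun k => ?_) hb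
      rw [dist_comm]
      exact hdist k σ
    exact hAHc.isClosed.mem_of_tendsto htend (Filter.Eventually.of_forall fun k => hmem k σ)
  -- the graph is contained in AH
  have hsub : {p : X × Y | p.1 ∈ AF ∧ p.2 = T p.1} ⊆ AH := by
    rintro ⟨x, y⟩ ⟨hx, hy⟩
    simp only [Set.mem_setOf_eq] at hx hy
    have heq : ((x, y) : X × Y) = (φF (τF x), φG (τF x)) := by
      rw [hy, hT, hτ x hx]
    rw [heq]
    exact hφH (τF x)
  refine ⟨hsub, ?_, dimH_mono hsub⟩
  -- AF is the image of the graph under the 1-Lipschitz projection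
  have himg : AF = Prod.fst '' {p : X × Y | p.1 ∈ AF ∧ p.2 = T p.1} := by
    ext x
    constructor
    · intro hx
      exact ⟨(x, T x), ⟨hx, rfl⟩, rfl⟩
    · rintro ⟨p, ⟨hp, -⟩, rfl⟩
      exact hp
  have hL : LipschitzWith 1 (Prod.fst : X × Y → X) := LipschitzWith.prod_fst
  have hle := hL.dimH_image_le {p : X × Y | p.1 ∈ AF ∧ p.2 = T p.1}
  rwa [← himg] at hle
end

section
/- If the IFS F = {X; f₁,…,f_N} satisfies the strong open set condition, then the product IFS H = {X × Y; h₁,…,h_N} with h_i(x,y) = (f_i(x), g_i(y)) satisfies the strong open set condition. -/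
/-- if the IFS `F` satisfies the strong open set condition, then the
product IFS `H` (with attractor `A_H`) satisfies the strong open set condition. -/
theorem stmt4 {X Y : Type*} [MetricSpace X] [CompleteSpace X]
    [MetricSpace Y] [CompleteSpace Y] {N : ℕ}
    (f : Fin N → X → X) (g : Fin N → Y → Y)
    (cf cg : Fin N → NNReal) (hcf : ∀ i, cf i < 1) (hcg : ∀ i, cg i < 1)
    (hf : ∀ i, LipschitzWith (cf i) (f i)) (hg : ∀ i, LipschitzWith (cg i) (g i))
    (AF : Set X) (hAF : IsCompact AF ∧ AF.Nonempty ∧ AF = ⋃ i, f i '' AF)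
    (AG : Set Y) (hAG : IsCompact AG ∧ AG.Nonempty ∧ AG = ⋃ i, g i '' AG)
    (AH : Set (X × Y)) (hAH : IsCompact AH ∧ AH.Nonempty ∧
      AH = ⋃ i, (fun p : X × Y => (f i p.1, g i p.2)) '' AH)
    -- the strong open set condition for `F`
    (U : Set X) (hUo : IsOpen U) (hUne : U.Nonempty)
    (hUinv : (⋃ i, f i '' U) ⊆ U)
    (hUdisj : ∀ i j, i ≠ j → Disjoint (f i '' U) (f j '' U))
    (hUmeet : (U ∩ AF).Nonempty) :
    ∃ W : Set (X × Y), IsOpen W ∧ W.Nonempty ∧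
      (⋃ i, (fun p : X × Y => (f i p.1, g i p.2)) '' W) ⊆ W ∧
      (∀ i j, i ≠ j →
        Disjoint ((fun p : X × Y => (f i p.1, g i p.2)) '' W)
          ((fun p : X × Y => (f j p.1, g j p.2)) '' W)) ∧
      (W ∩ AH).Nonempty := by
  obtain ⟨a₀, ha₀U, ha₀F⟩ := hUmeet
  obtain ⟨p₀, hp₀⟩ := hAH.2.1
  -- uniform contraction ratio
  set c : NNReal := Finset.univ.sup cf with hc_def
  have hc1 : (c : ℝ) < 1 := by
    have : c < 1 := by
      refine Finset.sup_lt_iff (by norm_num) |>.2 ?_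
      intro i _; exact hcf i
    exact_mod_cast this
  have hc0 : (0 : ℝ) ≤ (c : ℝ) := c.coe_nonneg
  have hfc : ∀ i, LipschitzWith c (f i) := fun i =>
    (hf i).weaken (Finset.le_sup (Finset.mem_univ i))
  -- AH is forward invariant
  have hHinv : ∀ i, ∀ p ∈ AH, (f i p.1, g i p.2) ∈ AH := by
    intro i p hp
    have : (f i p.1, g i p.2) ∈ ⋃ i, (fun p : X × Y => (f i p.1, g i p.2)) '' AH :=
      Set.mem_iUnion.2 ⟨i, ⟨p, hp, rfl⟩⟩
    rwa [← hAH.2.2] at this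
  -- bound distance from p₀.1 to AF
  obtain ⟨M, hM⟩ : ∃ M : ℝ, ∀ x ∈ AF, dist p₀.1 x ≤ M := by
    obtain ⟨r, hr⟩ := hAF.1.isBounded.subset_closedBall p₀.1
    exact ⟨r, fun x hx => by
      have := hr hx
      simpa [Metric.mem_closedBall, dist_comm] using this⟩
  -- key: points of AH with first coordinate close to any a ∈ AF
  have key : ∀ n : ℕ, ∀ a ∈ AF, ∃ q ∈ AH, dist q.1 a ≤ (c : ℝ) ^ n * M := by
    intro n
    induction n with
    | zero =>
      intro a ha
      exact ⟨p₀, hp₀, by simpa [dist_comm] using hM a ha⟩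
    | succ n ih =>
      intro a ha
      rw [hAF.2.2] at ha
      rcases Set.mem_iUnion.1 ha with ⟨i, a', ha', rfl⟩
      obtain ⟨q, hq, hqd⟩ := ih a' ha'
      refine ⟨(f i q.1, g i q.2), hHinv i q hq, ?_⟩
      have h1 : dist (f i q.1) (f i a') ≤ (c : ℝ) * dist q.1 a' := (hfc i).dist_le_mul _ _
      calc dist (f i q.1) (f i a') ≤ (c : ℝ) * dist q.1 a' := h1
        _ ≤ (c : ℝ) * ((c : ℝ) ^ n * M) := by
            exact mul_le_mul_of_nonneg_left hqd hc0
        _ = (c : ℝ) ^ (n + 1) * M := by ring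
  -- the product open set
  refine ⟨U ×ˢ Set.univ, hUo.prod isOpen_univ, ?_, ?_, ?_, ?_⟩
  · obtain ⟨u, hu⟩ := hUne
    obtain ⟨q, hq⟩ := hAH.2.1
    exact ⟨(u, q.2), hu, trivial⟩
  · intro p hp
    rcases Set.mem_iUnion.1 hp with ⟨i, q, hq, rfl⟩
    refine ⟨hUinv (Set.mem_iUnion.2 ⟨i, ⟨q.1, hq.1, rfl⟩⟩), trivial⟩
  · intro i j hij
    refine Set.disjoint_left.2 ?_
    rintro p ⟨q, hq, rfl⟩ ⟨r, hr, hre⟩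
    have h1 : f i q.1 ∈ f i '' U := ⟨q.1, hq.1, rfl⟩
    have h2 : f i q.1 ∈ f j '' U := by
      have : f j r.1 = f i q.1 := congrArg Prod.fst hre
      exact ⟨r.1, hr.1, this⟩
    exact Set.disjoint_left.1 (hUdisj i j hij) h1 h2
  · -- W meets AH
    obtain ⟨ε, hε, hball⟩ := Metric.isOpen_iff.1 hUo a₀ ha₀U
    have htend : Filter.Tendsto (fun n : ℕ => (c : ℝ) ^ n * M) Filter.atTop (nhds 0) := by
      have := tendsto_pow_atTop_nhds_zero_of_lt_one hc0 hc1
      simpa using this.mul_const M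
    obtain ⟨n, hn⟩ := (htend.eventually (gt_mem_nhds hε)).exists
    obtain ⟨q, hq, hqd⟩ := key n a₀ ha₀F
    refine ⟨q, ⟨hball ?_, trivial⟩, hq⟩
    exact Metric.mem_ball.2 (lt_of_le_of_lt hqd hn)
end

section
/- Let H = {X × Y; h₁,…,h_N} be an IFS satisfying the strong open set condition, where each h_i satisfies c_i D(p,q) ≤ D(h_i(p), h_i(q)) ≤ C_i D(p,q) with 0 < c_i ≤ C_i < 1. Then r ≤ dim_H(A_H) ≤ R, where r and R are the unique solutions of Σᵢ c_iʳ = 1 and Σᵢ C_i^R = 1 respectively. -/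
open Metric Set MeasureTheory

section IFS1
variable {Z : Type*} [MetricSpace Z] {N : ℕ}
variable (h : Fin N → Z → Z)

/-- composition of the IFS maps along a word -/
def wapp : List (Fin N) → Z → Z
  | [], z => z
  | i :: l, z => h i (wapp l z)

variable {h}

set_option linter.unusedSectionVars false

lemma wapp_append (l₁ l₂ : List (Fin N)) (z : Z) :
    wapp h (l₁ ++ l₂) z = wapp h l₁ (wapp h l₂ z) := by
  induction l₁ with
  | nil => rfl
  | cons i l ih => simp [wapp, ih]

variable {c C : Fin N → ℝ}

lemma cprod_pos (hc : ∀ i, 0 < c i) (l : List (Fin N)) : 0 < (l.map c).prod := by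
  induction l with
  | nil => simp
  | cons i l ih => simpa using mul_pos (hc i) ih

section basic
variable (hc : ∀ i, 0 < c i) (hcC : ∀ i, c i ≤ C i) (hC : ∀ i, C i < 1)
  (hbi : ∀ i p q, c i * dist p q ≤ dist (h i p) (h i q) ∧
      dist (h i p) (h i q) ≤ C i * dist p q)
include hc hcC hbi

lemma wapp_le (l : List (Fin N)) (p q : Z) :
    dist (wapp h l p) (wapp h l q) ≤ (l.map C).prod * dist p q := by
  induction l with
  | nil => simp [wapp]
  | cons i l ih =>
      simp only [wapp, List.map_cons, List.prod_cons]
      calc dist (h i (wapp h l p)) (h i (wapp h l q)) ≤ C i * dist (wapp h l p) (wapp h l q) :=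
            (hbi i _ _).2
        _ ≤ C i * ((l.map C).prod * dist p q) :=
            mul_le_mul_of_nonneg_left ih (le_trans (hc i).le (hcC i))
        _ = C i * (l.map C).prod * dist p q := by ring

lemma wapp_ge (l : List (Fin N)) (p q : Z) :
    (l.map c).prod * dist p q ≤ dist (wapp h l p) (wapp h l q) := by
  induction l with
  | nil => simp [wapp]
  | cons i l ih =>
      simp only [wapp, List.map_cons, List.prod_cons]
      calc c i * (l.map c).prod * dist p q = c i * ((l.map c).prod * dist p q) := by ring
        _ ≤ c i * dist (wapp h l p) (wapp h l q) := mul_le_mul_of_nonneg_left ih (hc i).le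
        _ ≤ dist (h i (wapp h l p)) (h i (wapp h l q)) := (hbi i _ _).1

lemma wapp_injective (l : List (Fin N)) : Function.Injective (wapp h l) := by
  intro p q hpq
  by_contra hne
  have h1 := wapp_ge hc hcC hbi l p q
  rw [hpq, dist_self] at h1
  have h2 : 0 < (l.map c).prod * dist p q := by
    apply mul_pos
    · exact cprod_pos hc l
    · exact dist_pos.2 (by exact fun hq => hne hq)
  linarith

lemma wapp_continuous (l : List (Fin N)) : Continuous (wapp h l) := by
  induction l with
  | nil => exact continuous_id
  | cons i l ih =>
      have : LipschitzWith (Real.toNNReal (C i)) (h i) := by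
        apply LipschitzWith.of_dist_le_mul
        intro p q
        refine le_trans ((hbi i p q).2) ?_
        rw [Real.coe_toNNReal _ (le_trans (hc i).le (hcC i))]
      exact this.continuous.comp ih

end basic

lemma cprod_le_one (hc : ∀ i, 0 < c i) (h1 : ∀ i, c i ≤ 1) (l : List (Fin N)) :
    (l.map c).prod ≤ 1 := by
  induction l with
  | nil => simp
  | cons i l ih =>
      simp only [List.map_cons, List.prod_cons]
      calc c i * (l.map c).prod ≤ 1 * 1 :=
        mul_le_mul (h1 i) ih (cprod_pos hc l).le zero_le_one
      _ = 1 := by ring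

lemma cprod_lt_one (hc : ∀ i, 0 < c i) (h1 : ∀ i, c i < 1)
    {l : List (Fin N)} (hl : l ≠ []) : (l.map c).prod < 1 := by
  cases l with
  | nil => simp at hl
  | cons i l =>
      simp only [List.map_cons, List.prod_cons]
      calc c i * (l.map c).prod ≤ c i * 1 :=
        mul_le_mul_of_nonneg_left (cprod_le_one hc (fun j => (h1 j).le) l) (hc i).le
      _ < 1 := by simpa using h1 i

lemma cprod_le_pow {Cm : ℝ} (hc : ∀ i, 0 < c i) (hm : ∀ i, c i ≤ Cm) (l : List (Fin N)) :
    (l.map c).prod ≤ Cm ^ l.length := by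
  induction l with
  | nil => simp
  | cons i l ih =>
      simp only [List.map_cons, List.prod_cons, List.length_cons, pow_succ]
      rw [mul_comm (Cm ^ l.length) Cm]
      exact mul_le_mul (hm i) ih (cprod_pos hc l).le (le_trans (hc i).le (hm i))

lemma cprod_le_cprod (hc : ∀ i, 0 < c i) (hcC : ∀ i, c i ≤ C i) (l : List (Fin N)) :
    (l.map c).prod ≤ (l.map C).prod := by
  induction l with
  | nil => simp
  | cons i l ih =>
      simp only [List.map_cons, List.prod_cons]
      exact mul_le_mul (hcC i) ih (cprod_pos hc l).le (le_trans (hc i).le (hcC i))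

end IFS1

open Metric Set MeasureTheory Bornology

section IFS2
variable {Z : Type*} [MetricSpace Z] {N : ℕ} {h : Fin N → Z → Z}

set_option linter.unusedSectionVars false

variable {c C : Fin N → ℝ} {A : Set Z}
variable (hc : ∀ i, 0 < c i) (hcC : ∀ i, c i ≤ C i) (hC : ∀ i, C i < 1)
  (hbi : ∀ i p q, c i * dist p q ≤ dist (h i p) (h i q) ∧
      dist (h i p) (h i q) ≤ C i * dist p q)
  (hAA : A = ⋃ i, h i '' A)

section attr
include hAA

lemma wapp_mem (l : List (Fin N)) {z : Z} (hz : z ∈ A) : wapp h l z ∈ A := by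
  induction l with
  | nil => exact hz
  | cons i l ih =>
      have : h i (wapp h l z) ∈ ⋃ j, h j '' A := mem_iUnion.2 ⟨i, mem_image_of_mem _ ih⟩
      rw [← hAA] at this
      exact this

lemma attr_subset_cover (n : ℕ) : A ⊆ ⋃ w : Fin n → Fin N, wapp h (List.ofFn w) '' A := by
  induction n with
  | zero =>
      intro z hz
      exact mem_iUnion.2 ⟨finZeroElim, by simpa [wapp] using hz⟩
  | succ n ih =>
      intro z hz
      -- z ∈ ⋃ i, h i '' A
      have h1 : z ∈ ⋃ i, h i '' A := hAA ▸ hz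
      obtain ⟨i, y, hy, rfl⟩ := by simpa using h1
      obtain ⟨w, x, hx, hwx⟩ := by simpa using ih hy
      refine mem_iUnion.2 ⟨Fin.cons i w, ⟨x, hx, ?_⟩⟩
      rw [List.ofFn_succ]
      simp only [Fin.cons_zero, Fin.cons_succ]
      show wapp h (i :: List.ofFn w) x = h i y
      rw [← hwx]; rfl

end attr

lemma ediam_wapp_le (hc : ∀ i, 0 < c i) (hcC : ∀ i, c i ≤ C i)
    (hbi : ∀ i p q, c i * dist p q ≤ dist (h i p) (h i q) ∧
      dist (h i p) (h i q) ≤ C i * dist p q)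
    (hb : IsBounded A) (l : List (Fin N)) :
    EMetric.diam (wapp h l '' A) ≤ ENNReal.ofReal ((l.map C).prod * diam A) := by
  apply EMetric.diam_le
  rintro x ⟨p, hp, rfl⟩ y ⟨q, hq, rfl⟩
  rw [edist_dist]
  apply ENNReal.ofReal_le_ofReal
  calc dist (wapp h l p) (wapp h l q) ≤ (l.map C).prod * dist p q := wapp_le hc hcC hbi l p q
    _ ≤ (l.map C).prod * diam A := by
        apply mul_le_mul_of_nonneg_left (dist_le_diam_of_mem hb hp hq)
        exact le_trans (cprod_pos hc l).le (cprod_le_cprod hc hcC l)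

lemma isBounded_wapp (hc : ∀ i, 0 < c i) (hcC : ∀ i, c i ≤ C i)
    (hbi : ∀ i p q, c i * dist p q ≤ dist (h i p) (h i q) ∧
      dist (h i p) (h i q) ≤ C i * dist p q)
    (hb : IsBounded A) (l : List (Fin N)) : IsBounded (wapp h l '' A) := by
  rw [Metric.isBounded_iff] at hb ⊢
  obtain ⟨K, hK⟩ := hb
  refine ⟨(l.map C).prod * K, ?_⟩
  rintro x ⟨p, hp, rfl⟩ y ⟨q, hq, rfl⟩
  exact (wapp_le hc hcC hbi l p q).trans (mul_le_mul_of_nonneg_left (hK hp hq)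
    (le_trans (cprod_pos hc l).le (cprod_le_cprod hc hcC l)))

lemma diam_wapp_le (hc : ∀ i, 0 < c i) (hcC : ∀ i, c i ≤ C i)
    (hbi : ∀ i p q, c i * dist p q ≤ dist (h i p) (h i q) ∧
      dist (h i p) (h i q) ≤ C i * dist p q)
    (hb : IsBounded A) (l : List (Fin N)) :
    diam (wapp h l '' A) ≤ (l.map C).prod * diam A := by
  apply diam_le_of_forall_dist_le
  · exact mul_nonneg (le_trans (cprod_pos hc l).le (cprod_le_cprod hc hcC l)) diam_nonneg
  rintro x ⟨p, hp, rfl⟩ y ⟨q, hq, rfl⟩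
  exact (wapp_le hc hcC hbi l p q).trans (mul_le_mul_of_nonneg_left
    (dist_le_diam_of_mem hb hp hq) (le_trans (cprod_pos hc l).le (cprod_le_cprod hc hcC l)))

/-- sum over words of length n of the product of weights -/
lemma sum_words_prod (f : Fin N → ℝ) (n : ℕ) :
    ∑ w : Fin n → Fin N, ∏ j, f (w j) = (∑ i, f i) ^ n := by
  rw [Fintype.sum_pow]

end IFS2

open Metric Set MeasureTheory Bornology Filter
open scoped NNReal ENNReal

section IFS3
variable {Z : Type*} [MetricSpace Z] {N : ℕ} {h : Fin N → Z → Z}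

set_option linter.unusedSectionVars false

variable {c C : Fin N → ℝ} {A : Set Z}

theorem dimH_attr_le [MeasurableSpace Z] [BorelSpace Z]
    (hc : ∀ i, 0 < c i) (hcC : ∀ i, c i ≤ C i) (hC : ∀ i, C i < 1)
    (hbi : ∀ i p q, c i * dist p q ≤ dist (h i p) (h i q) ∧
      dist (h i p) (h i q) ≤ C i * dist p q)
    (hAc : IsCompact A) (hAA : A = ⋃ i, h i '' A)
    {R : ℝ} (hR : ∑ i, C i ^ R = 1) : dimH A ≤ ENNReal.ofReal R := by
  have hC0 : ∀ i, 0 < C i := fun i => lt_of_lt_of_le (hc i) (hcC i)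
  have hN : 0 < N := by
    by_contra hN
    push_neg at hN
    interval_cases N
    simp at hR
  have hNe : (Finset.univ : Finset (Fin N)).Nonempty := by
    simpa [Finset.univ_nonempty_iff, ← Fin.pos_iff_nonempty]
  have hR0 : 0 ≤ R := by
    by_contra hR0
    push_neg at hR0
    have : ∀ i : Fin N, (1:ℝ) < C i ^ R := fun i =>
      Real.one_lt_rpow_iff_of_pos (hC0 i) |>.2 (Or.inr ⟨hC i, hR0⟩)
    have h2 : (1:ℝ) < ∑ i, C i ^ R := by
      calc (1:ℝ) ≤ (N:ℝ) := by exact_mod_cast hN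
        _ = ∑ _i : Fin N, (1:ℝ) := by simp
        _ < ∑ i, C i ^ R := Finset.sum_lt_sum_of_nonempty hNe (fun i _ => this i)
    rw [hR] at h2; exact lt_irrefl _ h2
  -- trivial case : A subsingleton
  rcases le_or_gt (diam A) 0 with hd | hd
  · have : A.Subsingleton := by
      intro p hp q hq
      have := dist_le_diam_of_mem hAc.isBounded hp hq
      have h0 : dist p q ≤ 0 := le_trans this hd
      exact dist_le_zero.1 h0
    rw [dimH_subsingleton this]
    exact zero_le
  -- main case
  have key : ∀ d : ℝ≥0, R < (d:ℝ) → dimH A ≤ (d : ℝ≥0∞) := by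
    intro d hd'
    have hd0 : (0:ℝ) < d := lt_of_le_of_lt hR0 hd'
    -- the contraction factor
    obtain ⟨Cm, hCm1, hCmmem⟩ : ∃ Cm : ℝ, Cm < 1 ∧ ∀ i, C i ≤ Cm := by
      refine ⟨Finset.univ.sup' hNe C, ?_, fun i => Finset.le_sup' C (Finset.mem_univ i)⟩
      obtain ⟨i, _, hi⟩ := Finset.exists_mem_eq_sup' hNe C
      rw [hi]; exact hC i
    have hCm0 : 0 < Cm := lt_of_lt_of_le (hC0 ⟨0, hN⟩) (hCmmem _)
    have hsum1 : ∑ i, C i ^ (d:ℝ) ≤ 1 := by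
      rw [← hR]
      apply Finset.sum_le_sum
      intro i _
      exact Real.rpow_le_rpow_of_exponent_ge (hC0 i) (hC i).le hd'.le
    apply dimH_le_of_hausdorffMeasure_ne_top (d := d)
    have hb : μH[(d:ℝ)] A ≤ ENNReal.ofReal (diam A ^ (d:ℝ)) := by
      have hcov := MeasureTheory.Measure.hausdorffMeasure_le_liminf_tsum (ι := fun n : ℕ => Fin n → Fin N) (d:ℝ) A
        (l := atTop) (fun n => ENNReal.ofReal (Cm ^ n * diam A))
        (by
          rw [show (0:ℝ≥0∞) = ENNReal.ofReal 0 by simp]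
          apply ENNReal.tendsto_ofReal
          simpa using (tendsto_pow_atTop_nhds_zero_of_lt_one hCm0.le hCm1).mul_const (diam A))
        (fun n w => wapp h (List.ofFn w) '' A)
        (by
          filter_upwards with n
          intro w
          refine le_trans (ediam_wapp_le hc hcC hbi hAc.isBounded _) ?_
          apply ENNReal.ofReal_le_ofReal
          apply mul_le_mul_of_nonneg_right _ diam_nonneg
          rw [List.map_ofFn, List.prod_ofFn]
          calc ∏ j, C (w j) ≤ ∏ _j : Fin n, Cm :=
                Finset.prod_le_prod (fun j _ => (hC0 (w j)).le) (fun j _ => hCmmem (w j))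
            _ = Cm ^ n := by simp)
        (by filter_upwards with n; exact attr_subset_cover hAA n)
      refine le_trans hcov ?_
      have hterm : ∀ n : ℕ, (∑' w : Fin n → Fin N, EMetric.diam (wapp h (List.ofFn w) '' A) ^ (d:ℝ))
          ≤ ENNReal.ofReal (diam A ^ (d:ℝ)) := by
        intro n
        rw [tsum_fintype]
        calc ∑ w : Fin n → Fin N, EMetric.diam (wapp h (List.ofFn w) '' A) ^ (d:ℝ)
            ≤ ∑ w : Fin n → Fin N, ENNReal.ofReal (((∏ j, C (w j)) * diam A) ^ (d:ℝ)) := by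
              apply Finset.sum_le_sum
              intro w _
              have h1 := ediam_wapp_le hc hcC hbi hAc.isBounded (h := h) (List.ofFn w)
              rw [List.map_ofFn, List.prod_ofFn] at h1
              calc EMetric.diam (wapp h (List.ofFn w) '' A) ^ (d:ℝ)
                  ≤ (ENNReal.ofReal ((∏ j, C (w j)) * diam A)) ^ (d:ℝ) :=
                    ENNReal.rpow_le_rpow h1 hd0.le
                _ = ENNReal.ofReal (((∏ j, C (w j)) * diam A) ^ (d:ℝ)) := by
                    rw [← ENNReal.ofReal_rpow_of_pos]
                    exact mul_pos (Finset.prod_pos (fun j _ => hC0 (w j))) hd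
          _ = ENNReal.ofReal ((∑ w : Fin n → Fin N, (∏ j, C (w j)) ^ (d:ℝ)) * diam A ^ (d:ℝ)) := by
              rw [← ENNReal.ofReal_sum_of_nonneg (fun w _ => Real.rpow_nonneg
                (mul_nonneg (Finset.prod_nonneg (fun j _ => (hC0 (w j)).le)) diam_nonneg) _)]
              congr 1
              rw [Finset.sum_mul]
              refine Finset.sum_congr rfl (fun w _ => ?_)
              exact Real.mul_rpow (Finset.prod_pos (fun j _ => hC0 (w j))).le diam_nonneg
          _ ≤ ENNReal.ofReal (1 * diam A ^ (d:ℝ)) := by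
              apply ENNReal.ofReal_le_ofReal
              apply mul_le_mul_of_nonneg_right _ (by positivity)
              have : ∀ w : Fin n → Fin N, (∏ j, C (w j)) ^ (d:ℝ) = ∏ j, C (w j) ^ (d:ℝ) := by
                intro w
                rw [← Real.finset_prod_rpow]
                intro j _
                exact (hC0 (w j)).le
              rw [Finset.sum_congr rfl (fun w _ => this w)]
              rw [sum_words_prod (fun i => C i ^ (d:ℝ)) n]
              exact pow_le_one₀ (Finset.sum_nonneg fun i _ => (Real.rpow_pos_of_pos (hC0 i) _).le) hsum1
          _ = ENNReal.ofReal (diam A ^ (d:ℝ)) := by rw [one_mul]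
      calc liminf (fun n => ∑' w : Fin n → Fin N, EMetric.diam (wapp h (List.ofFn w) '' A) ^ (d:ℝ)) atTop
          ≤ liminf (fun _n : ℕ => ENNReal.ofReal (diam A ^ (d:ℝ))) atTop :=
            liminf_le_liminf (Eventually.of_forall hterm)
        _ = ENNReal.ofReal (diam A ^ (d:ℝ)) := liminf_const _
    exact ne_top_of_le_ne_top ENNReal.ofReal_ne_top hb
  by_contra hcon
  push_neg at hcon
  obtain ⟨d, hd1, hd2⟩ := ENNReal.lt_iff_exists_nnreal_btwn.1 hcon
  have : R < (d:ℝ) := by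
    by_contra hh
    push_neg at hh
    have : (d : ℝ≥0∞) ≤ ENNReal.ofReal R := by
      rw [← ENNReal.ofReal_coe_nnreal]
      exact ENNReal.ofReal_le_ofReal hh
    exact absurd (lt_of_lt_of_le hd1 this) (lt_irrefl _)
  exact absurd (lt_of_lt_of_le hd2 (key d this)) (lt_irrefl _)

end IFS3

section IFS4
open Metric Set MeasureTheory Bornology Filter
open scoped NNReal ENNReal

variable {Z : Type*} [MetricSpace Z] {N : ℕ} {h : Fin N → Z → Z}

set_option linter.unusedSectionVars false

variable {c C : Fin N → ℝ} {A V : Set Z}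

section sosc
variable (hc : ∀ i, 0 < c i) (hcC : ∀ i, c i ≤ C i) (hC : ∀ i, C i < 1)
  (hbi : ∀ i p q, c i * dist p q ≤ dist (h i p) (h i q) ∧
      dist (h i p) (h i q) ≤ C i * dist p q)
  (hVinv : (⋃ i, h i '' V) ⊆ V)
  (hVdisj : ∀ i j, i ≠ j → Disjoint (h i '' V) (h j '' V))

include hVinv in
lemma wapp_V_subset (l : List (Fin N)) : wapp h l '' V ⊆ V := by
  induction l with
  | nil => intro z hz; simpa [wapp] using hz
  | cons i l ih =>
      rintro z ⟨y, hy, rfl⟩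
      show wapp h (i :: l) y ∈ V
      have : wapp h (i :: l) y = h i (wapp h l y) := rfl
      rw [this]
      exact hVinv (mem_iUnion.2 ⟨i, mem_image_of_mem _ (ih (mem_image_of_mem _ hy))⟩)

include hc hcC hbi hVinv hVdisj in
lemma wapp_V_disjoint : ∀ (l l' : List (Fin N)), l.length = l'.length → l ≠ l' →
    Disjoint (wapp h l '' V) (wapp h l' '' V) := by
  intro l
  induction l with
  | nil => intro l' hlen hne; cases l' <;> simp_all
  | cons i l ih =>
      intro l' hlen hne
      cases l' with
      | nil => simp at hlen
      | cons j l'' =>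
          rcases eq_or_ne i j with rfl | hij
          · have hne' : l ≠ l'' := by
              intro hll; exact hne (by rw [hll])
            have hd := ih l'' (by simpa using hlen) hne'
            have : ∀ (m : List (Fin N)), wapp h (i :: m) '' V = h i '' (wapp h m '' V) := by
              intro m
              ext z
              constructor
              · rintro ⟨y, hy, rfl⟩; exact ⟨wapp h m y, mem_image_of_mem _ hy, rfl⟩
              · rintro ⟨y, ⟨x, hx, rfl⟩, rfl⟩; exact ⟨x, hx, rfl⟩
            rw [this l, this l'']
            apply Set.disjoint_image_of_injective (wapp_injective hc hcC hbi [i]) hd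
          · have h1 : wapp h (i :: l) '' V ⊆ h i '' V := by
              rintro z ⟨y, hy, rfl⟩
              exact mem_image_of_mem _ (wapp_V_subset hVinv l (mem_image_of_mem _ hy))
            have h2 : wapp h (j :: l'') '' V ⊆ h j '' V := by
              rintro z ⟨y, hy, rfl⟩
              exact mem_image_of_mem _ (wapp_V_subset hVinv l'' (mem_image_of_mem _ hy))
            exact Set.disjoint_of_subset h1 h2 (hVdisj i j hij)

include hc hcC hC hbi in
lemma exists_inner_word (hAc : IsCompact A) (hAA : A = ⋃ i, h i '' A)
    (hN : 0 < N) (hVo : IsOpen V) (hVmeet : (V ∩ A).Nonempty) :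
    ∃ u : List (Fin N), u ≠ [] ∧ wapp h u '' A ⊆ V := by
  obtain ⟨x₀, hx₀V, hx₀A⟩ := hVmeet
  obtain ⟨ε, hε, hball⟩ := Metric.isOpen_iff.1 hVo x₀ hx₀V
  have hC0 : ∀ i, 0 < C i := fun i => lt_of_lt_of_le (hc i) (hcC i)
  have hNe : (Finset.univ : Finset (Fin N)).Nonempty := by
    simpa [Finset.univ_nonempty_iff, ← Fin.pos_iff_nonempty]
  obtain ⟨Cm, hCm1, hCmmem⟩ : ∃ Cm : ℝ, Cm < 1 ∧ ∀ i, C i ≤ Cm := by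
    refine ⟨Finset.univ.sup' hNe C, ?_, fun i => Finset.le_sup' C (Finset.mem_univ i)⟩
    obtain ⟨i, _, hi⟩ := Finset.exists_mem_eq_sup' hNe C
    rw [hi]; exact hC i
  have hCm0 : 0 < Cm := lt_of_lt_of_le (hC0 ⟨0, hN⟩) (hCmmem _)
  -- find words containing x₀
  have hword : ∀ m : ℕ, ∃ u : List (Fin N), u.length = m ∧ x₀ ∈ wapp h u '' A := by
    intro m
    induction m with
    | zero => exact ⟨[], rfl, by simpa [wapp] using hx₀A⟩
    | succ m ih =>
        obtain ⟨u, hu, y, hyA, hyx⟩ := ih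
        have : y ∈ ⋃ i, h i '' A := hAA ▸ hyA
        obtain ⟨i, x, hx, rfl⟩ := by simpa using this
        exact ⟨u ++ [i], by simp [hu], x, hx, by rw [wapp_append]; simp [wapp]; exact hyx⟩
  obtain ⟨m, hm1, hm⟩ : ∃ m : ℕ, 1 ≤ m ∧ Cm ^ m * diam A < ε := by
    have := tendsto_pow_atTop_nhds_zero_of_lt_one hCm0.le hCm1
    have h2 : Tendsto (fun m : ℕ => Cm ^ m * diam A) atTop (nhds 0) := by
      simpa using this.mul_const (diam A)
    have h3 := (h2.eventually (eventually_lt_nhds hε)).and (eventually_ge_atTop 1)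
    obtain ⟨m, hm⟩ := h3.exists
    exact ⟨m, hm.2, by simpa using hm.1⟩
  obtain ⟨u, hulen, hux⟩ := hword m
  refine ⟨u, by intro hnil; rw [hnil] at hulen; simp at hulen; omega, ?_⟩
  intro z hz
  apply hball
  rw [mem_ball]
  calc dist z x₀ ≤ diam (wapp h u '' A) :=
        dist_le_diam_of_mem (isBounded_wapp hc hcC hbi hAc.isBounded u) hz hux
    _ ≤ (u.map C).prod * diam A := diam_wapp_le hc hcC hbi hAc.isBounded u
    _ ≤ Cm ^ m * diam A := by
        apply mul_le_mul_of_nonneg_right _ diam_nonneg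
        have := cprod_le_pow (c := C) (fun i => hC0 i) hCmmem u
        rwa [hulen] at this
    _ < ε := hm

end sosc
end IFS4

section IFS5
open Metric Set MeasureTheory Bornology Filter
open scoped NNReal ENNReal

variable {Z : Type*} [MetricSpace Z] {N : ℕ}

set_option linter.unusedSectionVars false

/-- iterated application of the blocks of the word `u`-extended IFS along a code -/
def gmap (h : Fin N → Z → Z) (u : List (Fin N)) {n : ℕ} (α : ℕ → (Fin n → Fin N)) :
    ℕ → Z → Z
  | 0 => fun z => z
  | (k+1) => fun z => gmap h u α k (wapp h (List.ofFn (α k) ++ u) z)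

variable {h : Fin N → Z → Z} {c C : Fin N → ℝ} {A V : Set Z} {u : List (Fin N)} {n : ℕ}

lemma gmap_shift (α : ℕ → (Fin n → Fin N)) (k : ℕ) (z : Z) :
    gmap h u α (k+1) z
      = wapp h (List.ofFn (α 0) ++ u) (gmap h u (fun j => α (j+1)) k z) := by
  induction k generalizing z with
  | zero => rfl
  | succ k ih =>
      show gmap h u α (k+1) (wapp h (List.ofFn (α (k+1)) ++ u) z) = _
      rw [ih]
      rfl

section props
variable (hc : ∀ i, 0 < c i) (hcC : ∀ i, c i ≤ C i) (hC : ∀ i, C i < 1)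
  (hbi : ∀ i p q, c i * dist p q ≤ dist (h i p) (h i q) ∧
      dist (h i p) (h i q) ≤ C i * dist p q)
  (hAA : A = ⋃ i, h i '' A)

include hAA in
lemma gmap_mem (α : ℕ → (Fin n → Fin N)) (k : ℕ) {z : Z} (hz : z ∈ A) :
    gmap h u α k z ∈ A := by
  induction k generalizing z with
  | zero => exact hz
  | succ k ih =>
      show gmap h u α k (wapp h (List.ofFn (α k) ++ u) z) ∈ A
      exact ih (wapp_mem hAA _ hz)

include hc hcC hC hbi in
lemma gmap_dist_le (α : ℕ → (Fin n → Fin N)) (k : ℕ) (p q : Z) :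
    dist (gmap h u α k p) (gmap h u α k q) ≤ ((u.map C).prod) ^ k * dist p q := by
  induction k generalizing p q with
  | zero => simp [gmap]
  | succ k ih =>
      show dist (gmap h u α k (wapp h (List.ofFn (α k) ++ u) p))
        (gmap h u α k (wapp h (List.ofFn (α k) ++ u) q)) ≤ _
      have h2 : dist (wapp h (List.ofFn (α k) ++ u) p) (wapp h (List.ofFn (α k) ++ u) q)
          ≤ (u.map C).prod * dist p q := by
        refine le_trans (wapp_le hc hcC hbi _ p q) ?_
        apply mul_le_mul_of_nonneg_right _ dist_nonneg
        rw [List.map_append, List.prod_append]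
        have h3 : ((List.ofFn (α k)).map C).prod ≤ 1 :=
          cprod_le_one (fun i => lt_of_lt_of_le (hc i) (hcC i)) (fun i => (hC i).le) _
        calc ((List.ofFn (α k)).map C).prod * (u.map C).prod ≤ 1 * (u.map C).prod :=
              mul_le_mul_of_nonneg_right h3
                (cprod_pos (fun i => lt_of_lt_of_le (hc i) (hcC i)) u).le
          _ = (u.map C).prod := one_mul _
      calc dist (gmap h u α k (wapp h (List.ofFn (α k) ++ u) p))
            (gmap h u α k (wapp h (List.ofFn (α k) ++ u) q))
          ≤ (u.map C).prod ^ k * dist (wapp h (List.ofFn (α k) ++ u) p)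
              (wapp h (List.ofFn (α k) ++ u) q) := ih _ _
        _ ≤ (u.map C).prod ^ k * ((u.map C).prod * dist p q) :=
            mul_le_mul_of_nonneg_left h2
              (pow_nonneg (cprod_pos (fun i => lt_of_lt_of_le (hc i) (hcC i)) u).le k)
        _ = (u.map C).prod ^ (k+1) * dist p q := by ring

include hc hcC hC hbi hAA in
lemma exists_coding (hAc : IsCompact A) (hAne : A.Nonempty) (hu : u ≠ []) :
    ∃ π : (ℕ → (Fin n → Fin N)) → Z, (∀ α, π α ∈ A) ∧
      (∀ α, π α = wapp h (List.ofFn (α 0) ++ u) (π (fun j => α (j+1)))) := by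
  classical
  obtain ⟨z₀, hz₀⟩ := hAne
  set Λ : ℝ := (u.map C).prod with hΛ
  have hC0 : ∀ i, 0 < C i := fun i => lt_of_lt_of_le (hc i) (hcC i)
  have hΛ0 : 0 < Λ := cprod_pos hC0 u
  have hΛ1 : Λ < 1 := cprod_lt_one hC0 hC hu
  have hcau : ∀ α : ℕ → (Fin n → Fin N), CauchySeq (fun k => gmap h u α k z₀) := by
    intro α
    apply cauchySeq_of_le_geometric Λ (diam A) hΛ1
    intro k
    show dist (gmap h u α k z₀) (gmap h u α (k+1) z₀) ≤ diam A * Λ ^ k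
    have : gmap h u α (k+1) z₀ = gmap h u α k (wapp h (List.ofFn (α k) ++ u) z₀) := rfl
    rw [this]
    calc dist (gmap h u α k z₀) (gmap h u α k (wapp h (List.ofFn (α k) ++ u) z₀))
        ≤ Λ ^ k * dist z₀ (wapp h (List.ofFn (α k) ++ u) z₀) :=
          gmap_dist_le hc hcC hC hbi α k _ _
      _ ≤ Λ ^ k * diam A := by
          apply mul_le_mul_of_nonneg_left _ (pow_nonneg hΛ0.le k)
          exact dist_le_diam_of_mem hAc.isBounded hz₀ (wapp_mem hAA _ hz₀)
      _ = diam A * Λ ^ k := by ring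
  have hlim : ∀ α : ℕ → (Fin n → Fin N), ∃ x ∈ A,
      Tendsto (fun k => gmap h u α k z₀) atTop (nhds x) :=
    fun α => cauchySeq_tendsto_of_isComplete hAc.isComplete
      (fun k => gmap_mem hAA α k hz₀) (hcau α)
  choose π hπA hπlim using hlim
  refine ⟨π, hπA, ?_⟩
  intro α
  have h1 : Tendsto (fun k => gmap h u α (k+1) z₀) atTop (nhds (π α)) :=
    (hπlim α).comp (tendsto_add_atTop_nat 1)
  have h2 : Tendsto (fun k => gmap h u α (k+1) z₀) atTop
      (nhds (wapp h (List.ofFn (α 0) ++ u) (π (fun j => α (j+1))))) := by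
    have hcont := (wapp_continuous hc hcC hbi (h := h) (List.ofFn (α 0) ++ u)).continuousAt
      (x := π (fun j => α (j+1)))
    have h3 := (hπlim (fun j => α (j+1)))
    have h4 := (hcont.tendsto.comp h3)
    refine h4.congr ?_
    intro k
    exact (gmap_shift α k z₀).symm
  exact tendsto_nhds_unique h1 h2

end props
end IFS5

section PhiSec
open Filter
namespace IFSPhi

variable {M : ℕ} (q : Fin M → ℝ)

/-- cumulative weight below `j` -/
def Qv (j : Fin M) : ℝ := ∑ m ∈ Finset.univ.filter (fun m => (m:Fin M) < j), q m

/-- product of the weights of the first `k` digits -/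
def P (β : ℕ → Fin M) (k : ℕ) : ℝ := ∏ i ∈ Finset.range k, q (β i)

/-- partial sums -/
def S (β : ℕ → Fin M) (k : ℕ) : ℝ := ∑ i ∈ Finset.range k, Qv q (β i) * P q β i

/-- the filling function -/
noncomputable def Φ (β : ℕ → Fin M) : ℝ := ∑' k, Qv q (β k) * P q β k

variable {q}
variable (hq : ∀ j, 0 < q j) (hq1 : ∀ j, q j < 1) (hsum : ∑ j, q j = 1)

section basic
include hq

lemma Qv_nonneg (j : Fin M) : 0 ≤ Qv q j :=
  Finset.sum_nonneg fun m _ => (hq m).le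

lemma Qv_succ (j : Fin M) (j' : Fin M) (hj : (j':ℕ) = (j:ℕ) + 1) :
    Qv q j' = Qv q j + q j := by
  unfold Qv
  have : Finset.univ.filter (fun m => m < j') =
      insert j (Finset.univ.filter (fun m => m < j)) := by
    ext m
    simp only [Finset.mem_insert, Finset.mem_filter, Finset.mem_univ, true_and]
    rw [Fin.lt_def, Fin.lt_def, hj]
    omega
  rw [this, Finset.sum_insert (by simp)]
  ring

include hsum in
lemma Qv_add_le (j : Fin M) : Qv q j + q j ≤ 1 := by
  rw [← hsum]
  have : Qv q j + q j = ∑ m ∈ insert j (Finset.univ.filter (fun m => m < j)), q m := by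
    rw [Finset.sum_insert (by simp)]; unfold Qv; ring
  rw [this]
  exact Finset.sum_le_sum_of_subset_of_nonneg (by intro m _; simp) (fun m _ _ => (hq m).le)

lemma P_nonneg (β : ℕ → Fin M) (k : ℕ) : 0 ≤ P q β k :=
  Finset.prod_nonneg fun i _ => (hq (β i)).le

lemma P_pos (β : ℕ → Fin M) (k : ℕ) : 0 < P q β k :=
  Finset.prod_pos fun i _ => hq (β i)

lemma P_succ' (β : ℕ → Fin M) (k : ℕ) :
    P q β (k+1) = q (β 0) * P q (fun j => β (j+1)) k := by
  unfold P
  rw [Finset.prod_range_succ']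
  ring

lemma S_succ' (β : ℕ → Fin M) (k : ℕ) :
    S q β (k+1) = Qv q (β 0) + q (β 0) * S q (fun j => β (j+1)) k := by
  unfold S
  rw [Finset.sum_range_succ']
  simp only [P_succ' (hq := hq)]
  rw [Finset.mul_sum]
  have : ∀ i, Qv q (β (i+1)) * (q (β 0) * P q (fun j => β (j+1)) i)
      = q (β 0) * (Qv q ((fun j => β (j+1)) i) * P q (fun j => β (j+1)) i) := by
    intro i; ring
  rw [Finset.sum_congr rfl (fun i _ => this i)]
  have : Qv q (β 0) * P q β 0 = Qv q (β 0) := by unfold P; simp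
  rw [this]
  ring

include hsum in
lemma S_add_P_le (β : ℕ → Fin M) (k : ℕ) : S q β k + P q β k ≤ 1 := by
  induction k generalizing β with
  | zero => simp [S, P]
  | succ k ih =>
      rw [S_succ' hq, P_succ' hq]
      have h2 := ih (fun j => β (j+1))
      calc Qv q (β 0) + q (β 0) * S q (fun j => β (j+1)) k
            + q (β 0) * P q (fun j => β (j+1)) k
          = Qv q (β 0) + q (β 0) * (S q (fun j => β (j+1)) k + P q (fun j => β (j+1)) k) := by
            ring
        _ ≤ Qv q (β 0) + q (β 0) * 1 := by
            apply add_le_add le_rfl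
            exact mul_le_mul_of_nonneg_left h2 (hq (β 0)).le
        _ ≤ 1 := by rw [mul_one]; exact Qv_add_le hq hsum (β 0)

include hsum in
lemma summable_terms (β : ℕ → Fin M) : Summable (fun k => Qv q (β k) * P q β k) := by
  apply summable_of_sum_range_le (c := 1)
  · intro k; exact mul_nonneg (Qv_nonneg hq _) (P_nonneg hq β k)
  · intro k
    have := S_add_P_le hq hsum β k
    have h2 := P_nonneg hq β k
    unfold S at this
    linarith

include hsum in
lemma Φ_eq_shift (β : ℕ → Fin M) :
    Φ q β = Qv q (β 0) + q (β 0) * Φ q (fun j => β (j+1)) := by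
  unfold Φ
  rw [Summable.tsum_eq_zero_add (summable_terms hq hsum β)]
  congr 1
  · unfold P; simp
  · rw [← tsum_mul_left]
    congr 1
    funext k
    rw [P_succ' hq]
    ring

include hsum in
lemma Φ_nonneg (β : ℕ → Fin M) : 0 ≤ Φ q β :=
  tsum_nonneg fun k => mul_nonneg (Qv_nonneg hq _) (P_nonneg hq β k)

include hsum in
lemma Φ_le_one (β : ℕ → Fin M) : Φ q β ≤ 1 := by
  apply Summable.tsum_le_of_sum_range_le (summable_terms hq hsum β)
  · intro k
    have := S_add_P_le hq hsum β k
    have h2 := P_nonneg hq β k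
    unfold S at this
    linarith

include hsum in
lemma Φ_sub_S (β : ℕ → Fin M) (k : ℕ) :
    Φ q β = S q β k + P q β k * Φ q (fun j => β (j+k)) := by
  induction k generalizing β with
  | zero =>
      simp only [S, P, Finset.range_zero, Finset.sum_empty, Finset.prod_empty, one_mul, zero_add]
      congr 1
  | succ k ih =>
      rw [S_succ' hq, P_succ' hq, Φ_eq_shift hq hsum β]
      rw [ih (fun j => β (j+1))]
      have hfun : (fun j => β (j + 1 + k)) = (fun j : ℕ => β (j + k + 1)) := by
        funext j; congr 1; omega
      have hfun2 : (fun j : ℕ => β (j + k + 1)) = (fun j : ℕ => β (j + (k + 1))) := by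
        funext j; congr 1
      rw [show (fun j : ℕ => β (j + (k + 1))) = (fun j : ℕ => β (j + 1 + k)) from by
        funext j; congr 1; omega]
      rw [← hfun]
      ring

include hsum in
lemma Φ_prefix_close (α β : ℕ → Fin M) (k : ℕ) (hpre : ∀ i < k, α i = β i) :
    |Φ q α - Φ q β| ≤ P q α k := by
  have hPj : ∀ i, i ≤ k → P q α i = P q β i := by
    intro i hik
    unfold P
    refine Finset.prod_congr rfl (fun m hm => ?_)
    rw [hpre m (lt_of_lt_of_le (Finset.mem_range.1 hm) hik)]
  have hS : S q α k = S q β k := by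
    unfold S
    refine Finset.sum_congr rfl (fun i hi => ?_)
    rw [hpre i (Finset.mem_range.1 hi), hPj i (Finset.mem_range.1 hi).le]
  have hP : P q α k = P q β k := hPj k le_rfl
  rw [Φ_sub_S hq hsum α k, Φ_sub_S hq hsum β k, hS, hP]
  have h1 := Φ_nonneg hq hsum (fun j => α (j+k))
  have h2 := Φ_le_one hq hsum (fun j => α (j+k))
  have h3 := Φ_nonneg hq hsum (fun j => β (j+k))
  have h4 := Φ_le_one hq hsum (fun j => β (j+k))
  have h5 := P_nonneg hq β k
  rw [abs_le]
  constructor <;> nlinarith [P_nonneg hq β k]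

-- digit existence
include hsum in
lemma exists_digit (hM : 0 < M) {x : ℝ} (hx0 : 0 ≤ x) (hx1 : x ≤ 1) :
    ∃ j : Fin M, Qv q j ≤ x ∧ x ≤ Qv q j + q j := by
  classical
  have h0 : Qv q (⟨0, hM⟩ : Fin M) = 0 := by
    unfold Qv
    apply Finset.sum_eq_zero
    intro m hm
    simp only [Finset.mem_filter] at hm
    exact absurd hm.2 (by simp [Fin.lt_def])
  set T := Finset.univ.filter (fun j : Fin M => Qv q j ≤ x) with hT
  have hTne : T.Nonempty := ⟨⟨0, hM⟩, by simp [hT, h0, hx0]⟩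
  set j := T.max' hTne with hj
  have hjT : j ∈ T := T.max'_mem hTne
  have hjx : Qv q j ≤ x := by simpa [hT] using hjT
  refine ⟨j, hjx, ?_⟩
  rcases lt_or_ge ((j:ℕ)+1) M with hlt | hge
  · set j' : Fin M := ⟨(j:ℕ)+1, hlt⟩ with hj'
    have hj'T : j' ∉ T := by
      intro hmem
      have h6 := T.le_max' j' hmem
      rw [← hj] at h6
      have h7 : (j':ℕ) ≤ (j:ℕ) := h6
      have h8 : (j':ℕ) = (j:ℕ)+1 := rfl
      omega
    have : ¬ (Qv q j' ≤ x) := by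
      intro hcon
      exact hj'T (by simp [hT, hcon])
    push_neg at this
    rw [Qv_succ hq j j' rfl] at this
    exact this.le
  · -- j is the last index
    have : Qv q j + q j = 1 := by
      rw [← hsum]
      have : (Finset.univ : Finset (Fin M)) = insert j (Finset.univ.filter (fun m => m < j)) := by
        ext m
        constructor
        · intro _
          simp only [Finset.mem_insert, Finset.mem_filter, Finset.mem_univ, true_and]
          rcases eq_or_ne m j with rfl | hne
          · exact Or.inl rfl
          · refine Or.inr ?_
            rw [Fin.lt_def]
            have hm := m.isLt
            have h9 : (m:ℕ) ≠ (j:ℕ) := fun hc => hne (Fin.ext hc)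
            have h10 : (j:ℕ) + 1 ≥ M := hge
            omega
        · intro _; exact Finset.mem_univ m
      rw [this, Finset.sum_insert (by simp)]
      unfold Qv
      ring
    rw [this]; exact hx1

include hsum in
lemma exists_code (hM : 0 < M) (hq1 : ∀ j, q j < 1) {x : ℝ} (hx0 : 0 ≤ x) (hx1 : x ≤ 1) :
    ∃ β : ℕ → Fin M, Φ q β = x := by
  classical
  -- the digit function
  have hdig : ∀ y : ℝ, ∃ j : Fin M, 0 ≤ y → y ≤ 1 → Qv q j ≤ y ∧ y ≤ Qv q j + q j := by
    intro y
    rcases le_or_gt 0 y with h0 | h0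
    · rcases le_or_gt y 1 with h1 | h1
      · obtain ⟨j, hj⟩ := exists_digit hq hsum hM h0 h1
        exact ⟨j, fun _ _ => hj⟩
      · exact ⟨⟨0, hM⟩, fun _ hy => absurd hy (not_le.2 h1)⟩
    · exact ⟨⟨0, hM⟩, fun hy _ => absurd hy (not_le.2 h0)⟩
  choose dig hdig using hdig
  set nxt : ℝ → ℝ := fun y => (y - Qv q (dig y)) / q (dig y) with hnxt
  set st : ℕ → ℝ := fun k => nxt^[k] x with hst
  set β : ℕ → Fin M := fun k => dig (st k) with hβ
  have hst_succ : ∀ k, st (k+1) = (st k - Qv q (β k)) / q (β k) := by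
    intro k
    show nxt^[k+1] x = (nxt^[k] x - Qv q (β k)) / q (β k)
    rw [Function.iterate_succ_apply']
  have hst_mem : ∀ k, 0 ≤ st k ∧ st k ≤ 1 := by
    intro k
    induction k with
    | zero => exact ⟨hx0, hx1⟩
    | succ k ih =>
        obtain ⟨hd1, hd2⟩ := hdig (st k) ih.1 ih.2
        rw [hst_succ k]
        constructor
        · apply div_nonneg _ (hq _).le
          rw [sub_nonneg]
          exact hd1
        · rw [div_le_one (hq _)]
          have := Qv_add_le hq hsum (β k)
          rw [hβ]
          linarith [hd2]
  -- invariant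
  have hinv : ∀ k, x = S q β k + P q β k * st k := by
    intro k
    induction k with
    | zero => simp [S, P, hst]
    | succ k ih =>
        rw [ih]
        have hSk : S q β (k+1) = S q β k + Qv q (β k) * P q β k := by
          unfold S; rw [Finset.sum_range_succ]
        have hPk : P q β (k+1) = P q β k * q (β k) := by
          unfold P; rw [Finset.prod_range_succ]
        rw [hSk, hPk, hst_succ k]
        have hq0 : q (β k) ≠ 0 := (hq _).ne'
        have hh : q (β k) * ((st k - Qv q (β k)) / q (β k))
            = st k - Qv q (β k) := by
          field_simp
        rw [mul_assoc, hh]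
        ring
  refine ⟨β, ?_⟩
  -- Φ β = lim S k = x
  have hΦS : ∀ k, |Φ q β - x| ≤ P q β k := by
    intro k
    rw [Φ_sub_S hq hsum β k, hinv k]
    have h1 := Φ_nonneg hq hsum (fun j => β (j+k))
    have h2 := Φ_le_one hq hsum (fun j => β (j+k))
    have h3 := (hst_mem k).1
    have h4 := (hst_mem k).2
    have h5 := P_nonneg hq β k
    rw [abs_le]
    constructor <;> nlinarith
  -- P k → 0
  obtain ⟨qm, hqm1, hqmmem⟩ : ∃ qm : ℝ, qm < 1 ∧ ∀ j, q j ≤ qm := by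
    have hNe : (Finset.univ : Finset (Fin M)).Nonempty := by
      simpa [Finset.univ_nonempty_iff, ← Fin.pos_iff_nonempty]
    refine ⟨Finset.univ.sup' hNe q, ?_, fun i => Finset.le_sup' q (Finset.mem_univ i)⟩
    obtain ⟨i, _, hi⟩ := Finset.exists_mem_eq_sup' hNe q
    rw [hi]; exact hq1 i
  have hqm0 : 0 < qm := lt_of_lt_of_le (hq ⟨0, hM⟩) (hqmmem _)
  have hPk : ∀ k, P q β k ≤ qm ^ k := by
    intro k
    unfold P
    calc ∏ i ∈ Finset.range k, q (β i) ≤ ∏ _i ∈ Finset.range k, qm :=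
          Finset.prod_le_prod (fun i _ => (hq (β i)).le) (fun i _ => hqmmem (β i))
      _ = qm ^ k := by simp
  have hsmall : ∀ ε > 0, |Φ q β - x| < ε := by
    intro ε hε
    obtain ⟨k, hk⟩ := exists_pow_lt_of_lt_one hε hqm1
    exact lt_of_le_of_lt (le_trans (hΦS k) (hPk k)) hk
  by_contra hne
  have hpos : 0 < |Φ q β - x| := abs_pos.2 (sub_ne_zero_of_ne hne)
  exact lt_irrefl _ (hsmall _ hpos)

end basic
end IFSPhi
end PhiSec

section IFS6
open Metric Set MeasureTheory Bornology Filter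
open scoped NNReal ENNReal

variable {Z : Type*} [MetricSpace Z] {N : ℕ} {h : Fin N → Z → Z}

set_option linter.unusedSectionVars false
set_option maxHeartbeats 1000000

variable {c C : Fin N → ℝ} {A V : Set Z}

theorem le_dimH_attr
    (hc : ∀ i, 0 < c i) (hcC : ∀ i, c i ≤ C i) (hC : ∀ i, C i < 1)
    (hbi : ∀ i p q, c i * dist p q ≤ dist (h i p) (h i q) ∧
      dist (h i p) (h i q) ≤ C i * dist p q)
    (hAc : IsCompact A) (hAne : A.Nonempty) (hAA : A = ⋃ i, h i '' A)
    (hVo : IsOpen V) (hVinv : (⋃ i, h i '' V) ⊆ V)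
    (hVdisj : ∀ i j, i ≠ j → Disjoint (h i '' V) (h j '' V))
    (hVmeet : (V ∩ A).Nonempty)
    {r : ℝ} (hr : ∑ i, c i ^ r = 1) : ENNReal.ofReal r ≤ dimH A := by
  classical
  rcases le_or_gt r 0 with hr0 | hr0
  · simp [ENNReal.ofReal_of_nonpos hr0]
  have hc1 : ∀ i, c i < 1 := fun i => lt_of_le_of_lt (hcC i) (hC i)
  have hN : 0 < N := by
    by_contra hN
    push_neg at hN
    interval_cases N
    simp at hr
  have hN2 : 2 ≤ N := by
    by_contra hlt
    push_neg at hlt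
    interval_cases N
    rw [Fin.sum_univ_one] at hr
    have h1 : c 0 ^ r < 1 := Real.rpow_lt_one (hc 0).le (hc1 0) hr0
    linarith
  -- the key step : dimension at least s for every 0 < s < r
  have key : ∀ s : ℝ, 0 < s → s < r → ENNReal.ofReal s ≤ dimH A := by
    intro s hs0 hsr
    -- ∑ c i ^ s > 1
    have hφ : 1 < ∑ i, c i ^ s := by
      rw [← hr]
      apply Finset.sum_lt_sum_of_nonempty
      · simpa [Finset.univ_nonempty_iff, ← Fin.pos_iff_nonempty]
      · intro i _
        exact Real.rpow_lt_rpow_of_exponent_gt (hc i) (hc1 i) hsr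
    set φ : ℝ := ∑ i, c i ^ s with hφdef
    -- the inner word
    obtain ⟨u, hu, huV⟩ := exists_inner_word hc hcC hC hbi hAc hAA hN hVo hVmeet
    set cu : ℝ := (u.map c).prod with hcu
    have hcu0 : 0 < cu := cprod_pos hc u
    have hcu1 : cu < 1 := cprod_lt_one hc hc1 hu
    -- choose n
    obtain ⟨n₀, hn₀⟩ := pow_unbounded_of_one_lt ((cu ^ s)⁻¹) hφ
    set n : ℕ := max n₀ 1 with hn
    have hn1 : 1 ≤ n := le_max_right _ _
    have hcus : 0 < cu ^ s := Real.rpow_pos_of_pos hcu0 s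
    have hTn : 1 ≤ cu ^ s * φ ^ n := by
      have h1 : (cu ^ s)⁻¹ < φ ^ n := lt_of_lt_of_le hn₀ (pow_le_pow_right₀ hφ.le (le_max_left _ _))
      calc (1:ℝ) = cu ^ s * (cu ^ s)⁻¹ := (mul_inv_cancel₀ hcus.ne').symm
        _ ≤ cu ^ s * φ ^ n := mul_le_mul_of_nonneg_left h1.le hcus.le
    -- the word system
    set M : ℕ := N ^ n with hM
    have hM2 : 2 ≤ M := by
      calc 2 ≤ N := hN2
        _ = N ^ 1 := (pow_one N).symm
        _ ≤ N ^ n := Nat.pow_le_pow_right (by omega) hn1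
    have hM0 : 0 < M := by omega
    have hcard : Fintype.card (Fin n → Fin N) = M := by
      simp [hM, Fintype.card_fun]
    set E : (Fin n → Fin N) ≃ Fin M := Fintype.equivFinOfCardEq hcard with hE
    set wrd : Fin M → List (Fin N) := fun m => List.ofFn (E.symm m) ++ u with hwrd
    set aL : Fin M → ℝ := fun m => ((wrd m).map c).prod with haL
    have haL0 : ∀ m, 0 < aL m := fun m => cprod_pos hc _
    have haL1 : ∀ m, aL m < 1 := fun m => cprod_lt_one hc hc1 (by simp [hwrd, hu])
    -- T ≥ 1
    set T : ℝ := ∑ m, aL m ^ s with hT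
    have haLw : ∀ m : Fin M, aL m = (∏ j, c (E.symm m j)) * cu := by
      intro m
      simp only [haL, hwrd, List.map_append, List.prod_append, List.map_ofFn]
      congr 1
      rw [List.prod_ofFn]
      rfl
    have hT1 : 1 ≤ T := by
      have : T = cu ^ s * φ ^ n := by
        rw [hT]
        have hstep : ∀ m : Fin M, aL m ^ s = (∏ j, c (E.symm m j) ^ s) * cu ^ s := by
          intro m
          rw [haLw m, Real.mul_rpow (Finset.prod_pos fun j _ => hc _).le hcu0.le,
            ← Real.finset_prod_rpow _ _ (fun j _ => (hc _).le)]
        rw [Finset.sum_congr rfl fun m _ => hstep m, ← Finset.sum_mul]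
        have hsum2 : ∑ m : Fin M, ∏ j, c (E.symm m j) ^ s
            = ∑ w : Fin n → Fin N, ∏ j, c (w j) ^ s :=
          Fintype.sum_equiv E.symm _ _ (fun m => rfl)
        rw [hsum2, sum_words_prod (fun i => c i ^ s) n]
        ring
      rw [this]; exact hTn
    have hT0 : 0 < T := lt_of_lt_of_le one_pos hT1
    -- the weights
    set q : Fin M → ℝ := fun m => aL m ^ s / T with hq
    have hq0 : ∀ m, 0 < q m := fun m => div_pos (Real.rpow_pos_of_pos (haL0 m) s) hT0
    have hq1 : ∀ m, q m < 1 := by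
      intro m
      rw [hq, div_lt_one hT0]
      exact lt_of_lt_of_le (Real.rpow_lt_one (haL0 m).le (haL1 m) hs0) hT1
    have hqsum : ∑ m, q m = 1 := by
      rw [hq, ← Finset.sum_div, ← hT, div_self hT0.ne']
    have hqle : ∀ m, q m ≤ aL m ^ s := by
      intro m
      rw [hq, div_le_iff₀ hT0]
      nlinarith [Real.rpow_pos_of_pos (haL0 m) s]
    -- the coding map
    obtain ⟨π₀, hπ₀A, hπ₀eq⟩ := exists_coding hc hcC hC hbi hAA hAc hAne hu (n := n)
    set π : (ℕ → Fin M) → Z := fun β => π₀ (fun k => E.symm (β k)) with hπ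
    have hπA : ∀ β, π β ∈ A := fun β => hπ₀A _
    have hπeq : ∀ β, π β = wapp h (wrd (β 0)) (π (fun j => β (j+1))) := by
      intro β
      rw [hπ]
      exact hπ₀eq (fun k => E.symm (β k))
    -- the cylinders
    set K : Fin M → Set Z := fun m => wapp h (wrd m) '' A with hK
    have hπK : ∀ β, π β ∈ K (β 0) := by
      intro β
      rw [hπeq β]
      exact mem_image_of_mem _ (hπA _)
    have hKA : ∀ m, K m ⊆ A := by
      intro m
      rintro z ⟨y, hy, rfl⟩
      exact wapp_mem hAA _ hy
    have hKc : ∀ m, IsCompact (K m) := fun m => hAc.image (wapp_continuous hc hcC hbi _)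
    have hKne : ∀ m, (K m).Nonempty := fun m => hAne.image _
    have hKdisj : ∀ m m', m ≠ m' → Disjoint (K m) (K m') := by
      intro m m' hmm
      have himg : ∀ m'' : Fin M, K m'' ⊆ wapp h (List.ofFn (E.symm m'')) '' V := by
        intro m''
        rintro z ⟨y, hy, rfl⟩
        rw [hwrd, wapp_append]
        exact mem_image_of_mem _ (huV (mem_image_of_mem _ hy))
      refine Set.disjoint_of_subset (himg m) (himg m') ?_
      apply wapp_V_disjoint hc hcC hbi hVinv hVdisj
      · simp
      · intro hcon
        exact hmm (E.symm.injective (List.ofFn_injective hcon))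
    -- the separation constant
    have hpair : ∀ p : Fin M × Fin M, ∃ δ' : ℝ, 0 < δ' ∧
        (p.1 ≠ p.2 → ∀ x ∈ K p.1, ∀ y ∈ K p.2, δ' ≤ dist x y) := by
      intro p
      by_cases hp : p.1 = p.2
      · exact ⟨1, one_pos, fun hcon => absurd hp hcon⟩
      · have hcomp : IsCompact (K p.1 ×ˢ K p.2) := (hKc p.1).prod (hKc p.2)
        have hne : (K p.1 ×ˢ K p.2).Nonempty := (hKne p.1).prod (hKne p.2)
        have hcont : ContinuousOn (fun z : Z × Z => dist z.1 z.2) (K p.1 ×ˢ K p.2) :=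
          continuous_dist.continuousOn
        obtain ⟨zm, hzm, hmin⟩ := hcomp.exists_isMinOn hne hcont
        refine ⟨dist zm.1 zm.2, ?_, ?_⟩
        · rw [dist_pos]
          intro hcon
          have h1 : zm.1 ∈ K p.1 := (Set.mem_prod.1 hzm).1
          have h2 : zm.2 ∈ K p.2 := (Set.mem_prod.1 hzm).2
          rw [hcon] at h1
          exact Set.disjoint_left.1 (hKdisj p.1 p.2 hp) h1 h2
        · intro _ x hx y hy
          exact hmin (show (x, y) ∈ K p.1 ×ˢ K p.2 from Set.mem_prod.2 ⟨hx, hy⟩)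
    choose D hD0 hDle using hpair
    have hMne : (Finset.univ : Finset (Fin M × Fin M)).Nonempty := by
      refine ⟨(⟨0, hM0⟩, ⟨0, hM0⟩), Finset.mem_univ _⟩
    set δ : ℝ := Finset.univ.inf' hMne D with hδ
    have hδ0 : 0 < δ := (Finset.lt_inf'_iff hMne).2 (fun p _ => hD0 p)
    have hδle : ∀ m m', m ≠ m' → ∀ x ∈ K m, ∀ y ∈ K m', δ ≤ dist x y := by
      intro m m' hmm x hx y hy
      exact le_trans (Finset.inf'_le D (Finset.mem_univ (m, m'))) (hDle (m, m') hmm x hx y hy)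
    -- the separation estimate
    have hsep : ∀ (k : ℕ) (β γ : ℕ → Fin M), (∀ i, i < k → β i = γ i) → β k ≠ γ k →
        δ * ∏ i ∈ Finset.range k, aL (β i) ≤ dist (π β) (π γ) := by
      intro k
      induction k with
      | zero =>
          intro β γ _ hne
          simpa using hδle (β 0) (γ 0) hne _ (hπK β) _ (hπK γ)
      | succ k ih =>
          intro β γ hpre hne
          have h00 : β 0 = γ 0 := hpre 0 (Nat.succ_pos k)
          have hshift := ih (fun j => β (j+1)) (fun j => γ (j+1))
            (fun i hi => hpre (i+1) (by omega)) (by simpa using hne)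
          rw [hπeq β, hπeq γ, ← h00]
          calc δ * ∏ i ∈ Finset.range (k+1), aL (β i)
              = aL (β 0) * (δ * ∏ i ∈ Finset.range k, aL (β (i+1))) := by
                rw [Finset.prod_range_succ']
                ring
            _ ≤ aL (β 0) * dist (π (fun j => β (j+1))) (π (fun j => γ (j+1))) :=
                mul_le_mul_of_nonneg_left hshift (haL0 (β 0)).le
            _ ≤ dist (wapp h (wrd (β 0)) (π (fun j => β (j+1))))
                  (wapp h (wrd (β 0)) (π (fun j => γ (j+1)))) := wapp_ge hc hcC hbi _ _ _
    -- injectivity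
    have hπinj : Function.Injective π := by
      intro β γ hβγ
      by_contra hne
      have hex : ∃ k, β k ≠ γ k := by
        by_contra hcon
        push_neg at hcon
        exact hne (funext hcon)
      set k := Nat.find hex with hk
      have h1 := hsep k β γ (fun i hi => by
        by_contra hcon
        have h5 : Nat.find hex ≤ i := Nat.find_le hcon
        omega) (Nat.find_spec hex)
      rw [hβγ, dist_self] at h1
      have h2 : 0 < δ * ∏ i ∈ Finset.range k, aL (β i) :=
        mul_pos hδ0 (Finset.prod_pos fun i _ => haL0 (β i))
      linarith
    -- the Hölder map to ℝ
    set S : Set Z := Set.range π with hS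
    have hSA : S ⊆ A := by
      rintro z ⟨β, rfl⟩
      exact hπA β
    set g : Z → ℝ := fun z => if hz : z ∈ S then IFSPhi.Φ q (Classical.choose hz) else 0
      with hg
    have hgπ : ∀ β, g (π β) = IFSPhi.Φ q β := by
      intro β
      have hmem : π β ∈ S := ⟨β, rfl⟩
      rw [hg]
      simp only [hmem, dif_pos]
      congr 1
      exact hπinj (Classical.choose_spec hmem)
    -- Hölder estimate
    have hHolder : HolderOnWith (δ ^ (-s)).toNNReal s.toNNReal g S := by
      intro z hz z' hz'
      obtain ⟨β, rfl⟩ := hz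
      obtain ⟨γ, rfl⟩ := hz'
      rcases eq_or_ne β γ with rfl | hne
      · simp
      have hex : ∃ k, β k ≠ γ k := by
        by_contra hcon
        push_neg at hcon
        exact hne (funext hcon)
      set k := Nat.find hex with hk
      have hpre : ∀ i, i < k → β i = γ i := fun i hi => by
        by_contra hcon
        have h5 : Nat.find hex ≤ i := Nat.find_le hcon
        omega
      have hsepk := hsep k β γ hpre (Nat.find_spec hex)
      set PP : ℝ := ∏ i ∈ Finset.range k, aL (β i) with hPP
      have hPP0 : 0 < PP := Finset.prod_pos fun i _ => haL0 (β i)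
      have hclose : |g (π β) - g (π γ)| ≤ PP ^ s := by
        rw [hgπ, hgπ]
        refine le_trans (IFSPhi.Φ_prefix_close hq0 hqsum β γ k hpre) ?_
        calc IFSPhi.P q β k ≤ ∏ i ∈ Finset.range k, aL (β i) ^ s :=
              Finset.prod_le_prod (fun i _ => (hq0 (β i)).le) (fun i _ => hqle (β i))
          _ = PP ^ s := Real.finset_prod_rpow _ _ (fun i _ => (haL0 (β i)).le) s
      have hdistpos : 0 < dist (π β) (π γ) :=
        dist_pos.2 (fun hcon => hne (hπinj hcon))
      have hPd : PP ≤ dist (π β) (π γ) / δ := by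
        rw [le_div_iff₀ hδ0]
        calc PP * δ = δ * PP := mul_comm _ _
          _ ≤ dist (π β) (π γ) := hsepk
      have hfinal : |g (π β) - g (π γ)| ≤ δ ^ (-s) * dist (π β) (π γ) ^ s := by
        refine le_trans hclose ?_
        calc PP ^ s ≤ (dist (π β) (π γ) / δ) ^ s :=
              Real.rpow_le_rpow hPP0.le hPd hs0.le
          _ = δ ^ (-s) * dist (π β) (π γ) ^ s := by
              rw [div_eq_mul_inv, Real.mul_rpow dist_nonneg (inv_nonneg.2 hδ0.le),
                ← Real.rpow_neg_one δ, ← Real.rpow_mul hδ0.le, neg_one_mul]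
              ring
      -- convert to edist
      rw [edist_dist, edist_dist, Real.dist_eq]
      calc ENNReal.ofReal |g (π β) - g (π γ)|
          ≤ ENNReal.ofReal (δ ^ (-s) * dist (π β) (π γ) ^ s) := ENNReal.ofReal_le_ofReal hfinal
        _ = ENNReal.ofReal (δ ^ (-s)) * ENNReal.ofReal (dist (π β) (π γ) ^ s) := by
            rw [ENNReal.ofReal_mul (by positivity)]
        _ = (δ ^ (-s)).toNNReal * ENNReal.ofReal (dist (π β) (π γ)) ^ (s.toNNReal : ℝ) := by
            rw [ENNReal.ofReal_rpow_of_pos hdistpos]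
            rw [Real.coe_toNNReal s hs0.le]
            rfl
    -- the image contains [0,1]
    have himg : Set.Icc (0:ℝ) 1 ⊆ g '' S := by
      intro x hx
      obtain ⟨β, hβ⟩ := IFSPhi.exists_code hq0 hqsum hM0 hq1 hx.1 hx.2
      exact ⟨π β, ⟨β, rfl⟩, by rw [hgπ β, hβ]⟩
    -- conclude
    have h1 : dimH (g '' S) ≤ dimH S / s.toNNReal :=
      hHolder.dimH_image_le (Real.toNNReal_pos.2 hs0)
    have h2 : (1:ℝ≥0∞) ≤ dimH (g '' S) := by
      have := dimH_mono himg
      rw [Real.dimH_of_nonempty_interior (by simp : (interior (Set.Icc (0:ℝ) 1)).Nonempty)] at this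
      simpa using this
    have h3 : (s.toNNReal : ℝ≥0∞) ≤ dimH S := by
      have h4 := le_trans h2 h1
      rw [ENNReal.le_div_iff_mul_le (Or.inl (ENNReal.coe_ne_zero.2 (Real.toNNReal_pos.2 hs0).ne'))
        (Or.inl ENNReal.coe_ne_top), one_mul] at h4
      exact h4
    calc ENNReal.ofReal s = (s.toNNReal : ℝ≥0∞) := rfl
      _ ≤ dimH S := h3
      _ ≤ dimH A := dimH_mono hSA
  -- conclude by approximation
  by_contra hcon
  push_neg at hcon
  obtain ⟨x, hx0, hx1, hx2⟩ := ENNReal.lt_iff_exists_real_btwn.1 hcon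
  have hxpos : 0 < x := by
    by_contra hxp
    push_neg at hxp
    rw [ENNReal.ofReal_of_nonpos hxp] at hx1
    exact absurd hx1 (by simp)
  have hxr : x < r := by
    have := (ENNReal.ofReal_lt_ofReal_iff hr0).1 hx2
    exact this
  exact absurd (lt_of_lt_of_le hx1 (key x hxpos hxr)) (lt_irrefl _)

end IFS6

/-- for a bi-Lipschitz IFS on `X × Y` (max metric) satisfying the
strong open set condition, `r ≤ dimH A_H ≤ R`, where `∑ cᵢʳ = 1` and
`∑ Cᵢᴿ = 1`. -/
theorem stmt7 {X Y : Type*} [MetricSpace X] [MetricSpace Y] {N : ℕ}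
    (h : Fin N → X × Y → X × Y) (c C : Fin N → ℝ)
    (hc : ∀ i, 0 < c i) (hcC : ∀ i, c i ≤ C i) (hC : ∀ i, C i < 1)
    (hbi : ∀ i p q, c i * dist p q ≤ dist (h i p) (h i q) ∧
      dist (h i p) (h i q) ≤ C i * dist p q)
    (A : Set (X × Y)) (hA : IsCompact A ∧ A.Nonempty ∧ A = ⋃ i, h i '' A)
    -- the strong open set condition
    (V : Set (X × Y)) (hVo : IsOpen V)
    (hVinv : (⋃ i, h i '' V) ⊆ V)
    (hVdisj : ∀ i j, i ≠ j → Disjoint (h i '' V) (h j '' V))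
    (hVmeet : (V ∩ A).Nonempty)
    (r R : ℝ) (hr : ∑ i, c i ^ r = 1) (hR : ∑ i, C i ^ R = 1) :
    ENNReal.ofReal r ≤ dimH A ∧ dimH A ≤ ENNReal.ofReal R := by
  letI : MeasurableSpace (X × Y) := borel _
  haveI : BorelSpace (X × Y) := ⟨rfl⟩
  obtain ⟨hAc, hAne, hAA⟩ := hA
  exact ⟨le_dimH_attr hc hcC hC hbi hAc hAne hAA hVo hVinv hVdisj hVmeet hr,
    dimH_attr_le hc hcC hC hbi hAc hAA hR⟩
end

section
/- Let W = {ℝ^d; f₁,…,f_N; p₁,…,p_N} be a weighted IFS with each f_i bi-Lipschitz: s_i‖x−y‖ ≤ ‖f_i(x)−f_i(y)‖ ≤ c_i‖x−y‖, 0 < s_i ≤ c_i < 1, and let μ be its invariant measure. Then for every n ∈ ℕ and r ∈ (0,∞), V_{n,r}(μ) ≤ min{ Σᵢ p_i c_iʳ V_{n_i,r}(μ) : n_i ∈ ℕ, Σᵢ n_i ≤ n }. -/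
open MeasureTheory

/-- The `n`-th quantization error of order `r` of a measure `μ` on `ℝ^d`. -/
noncomputable def quantErr {d : ℕ} (μ : Measure (EuclideanSpace ℝ (Fin d)))
    (r : ℝ) (n : ℕ) : ENNReal :=
  ⨅ (A : Finset (EuclideanSpace ℝ (Fin d))) (_ : A.card ≤ n),
    ∫⁻ x, ⨅ a ∈ A, edist x a ^ r ∂μ

lemma measAux {d : ℕ} (r : ℝ) (A : Finset (EuclideanSpace ℝ (Fin d))) :
    Measurable fun x => ⨅ a ∈ A, edist x a ^ r := by
  have h : (fun x : EuclideanSpace ℝ (Fin d) => ⨅ a ∈ A, edist x a ^ r)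
      = fun x => ⨅ b : {a // a ∈ A}, edist x b.1 ^ r := by
    funext x; rw [iInf_subtype']
  rw [h]
  exact Measurable.iInf fun b => (measurable_id.edist measurable_const).pow_const r

/-- for the invariant measure `μ` of a weighted bi-Lipschitz IFS,
`V_{n,r}(μ) ≤ ∑ pᵢ cᵢʳ V_{nᵢ,r}(μ)` for every choice of `nᵢ ∈ ℕ` with
`∑ nᵢ ≤ n`; i.e. `V_{n,r}(μ)` is at most the minimum of such sums. -/
theorem stmt13 {d N : ℕ}
    (f : Fin N → EuclideanSpace ℝ (Fin d) → EuclideanSpace ℝ (Fin d))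
    (s c p : Fin N → ℝ)
    (hs : ∀ i, 0 < s i) (hsc : ∀ i, s i ≤ c i) (hc : ∀ i, c i < 1)
    (hp : ∀ i, 0 < p i) (hpsum : ∑ i, p i = 1)
    (hbi : ∀ i x y, s i * dist x y ≤ dist (f i x) (f i y) ∧
      dist (f i x) (f i y) ≤ c i * dist x y)
    (μ : Measure (EuclideanSpace ℝ (Fin d))) [IsProbabilityMeasure μ]
    (Ksupp : Set (EuclideanSpace ℝ (Fin d))) (hK : IsCompact Ksupp) (hμK : μ Ksupp = 1)
    (hinv : μ = ∑ i, ENNReal.ofReal (p i) • μ.map (f i))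
    (r : ℝ) (hr : 0 < r) (n : ℕ)
    (ns : Fin N → ℕ) (hpos : ∀ i, 0 < ns i) (hsumn : ∑ i, ns i ≤ n) :
    quantErr μ r n ≤ ∑ i, ENNReal.ofReal (p i * c i ^ r) * quantErr μ r (ns i) := by
  classical
  have hc0 : ∀ i, 0 < c i := fun i => (hs i).trans_le (hsc i)
  have hcr0 : ∀ i, 0 < c i ^ r := fun i => Real.rpow_pos_of_pos (hc0 i) r
  have hfm : ∀ i, Measurable (f i) := by
    intro i
    have : LipschitzWith (Real.toNNReal (c i)) (f i) := by
      rw [lipschitzWith_iff_dist_le_mul]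
      intro x y
      simpa [Real.coe_toNNReal _ (hc0 i).le] using (hbi i x y).2
    exact this.continuous.measurable
  -- main estimate for any choice of finsets
  have key : ∀ B : Fin N → Finset (EuclideanSpace ℝ (Fin d)),
      (∀ i, (B i).card ≤ ns i) →
      quantErr μ r n ≤ ∑ i, ENNReal.ofReal (p i * c i ^ r) *
        ∫⁻ x, ⨅ a ∈ B i, edist x a ^ r ∂μ := by
    intro B hB
    set A : Finset (EuclideanSpace ℝ (Fin d)) :=
      Finset.univ.biUnion (fun i => (B i).image (f i)) with hAdef
    have hcard : A.card ≤ n :=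
      calc A.card ≤ ∑ i, ((B i).image (f i)).card := Finset.card_biUnion_le
        _ ≤ ∑ i, ns i :=
          Finset.sum_le_sum fun i _ => (Finset.card_image_le).trans (hB i)
        _ ≤ n := hsumn
    have h1 : quantErr μ r n ≤ ∫⁻ x, ⨅ a ∈ A, edist x a ^ r ∂μ := iInf₂_le A hcard
    refine h1.trans ?_
    conv_lhs => rw [hinv]
    rw [lintegral_finset_sum_measure]
    refine Finset.sum_le_sum fun i _ => ?_
    rw [lintegral_smul_measure, lintegral_map (measAux r A) (hfm i)]
    have hpt : ∀ x, (⨅ a ∈ A, edist (f i x) a ^ r) ≤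
        ENNReal.ofReal (c i ^ r) * ⨅ b ∈ B i, edist x b ^ r := by
      intro x
      have h0 : ENNReal.ofReal (c i ^ r) ≠ 0 := by
        simp [ENNReal.ofReal_eq_zero, not_le, hcr0 i]
      have htop : ENNReal.ofReal (c i ^ r) ≠ ⊤ := ENNReal.ofReal_ne_top
      rw [ENNReal.mul_iInf_of_ne h0 htop]
      refine le_iInf fun b => ?_
      rw [ENNReal.mul_iInf_of_ne h0 htop]
      refine le_iInf fun hb => ?_
      have hmem : f i b ∈ A := by
        apply Finset.mem_biUnion.2
        exact ⟨i, Finset.mem_univ i, Finset.mem_image_of_mem _ hb⟩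
      calc (⨅ a ∈ A, edist (f i x) a ^ r) ≤ edist (f i x) (f i b) ^ r :=
            iInf₂_le (f i b) hmem
        _ ≤ (ENNReal.ofReal (c i) * edist x b) ^ r := by
            refine ENNReal.rpow_le_rpow ?_ hr.le
            rw [edist_dist, edist_dist, ← ENNReal.ofReal_mul (hc0 i).le]
            exact ENNReal.ofReal_le_ofReal (hbi i x b).2
        _ = ENNReal.ofReal (c i ^ r) * edist x b ^ r := by
            rw [ENNReal.mul_rpow_of_nonneg _ _ hr.le,
              ENNReal.ofReal_rpow_of_pos (hc0 i)]
    calc ENNReal.ofReal (p i) * ∫⁻ x, ⨅ a ∈ A, edist (f i x) a ^ r ∂μ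
        ≤ ENNReal.ofReal (p i) *
          ∫⁻ x, ENNReal.ofReal (c i ^ r) * ⨅ b ∈ B i, edist x b ^ r ∂μ :=
          mul_le_mul_right (lintegral_mono hpt) _
      _ = ENNReal.ofReal (p i * c i ^ r) * ∫⁻ x, ⨅ b ∈ B i, edist x b ^ r ∂μ := by
          rw [lintegral_const_mul _ (measAux r (B i)), ← mul_assoc,
            ← ENNReal.ofReal_mul (hp i).le]
  -- epsilon argument
  refine ENNReal.le_of_forall_pos_le_add fun ε hε hfin => ?_
  have hop0 : ∀ i, ENNReal.ofReal (p i * c i ^ r) ≠ 0 := by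
    intro i
    simp only [ne_eq, ENNReal.ofReal_eq_zero, not_le]
    exact mul_pos (hp i) (hcr0 i)
  have hQfin : ∀ i, quantErr μ r (ns i) ≠ ⊤ := by
    intro i
    have h1 : ENNReal.ofReal (p i * c i ^ r) * quantErr μ r (ns i) < ⊤ :=
      lt_of_le_of_lt (Finset.single_le_sum
        (f := fun i => ENNReal.ofReal (p i * c i ^ r) * quantErr μ r (ns i))
        (fun _ _ => zero_le) (Finset.mem_univ i)) hfin
    intro habs
    rw [habs, ENNReal.mul_top (hop0 i)] at h1
    exact absurd h1 (lt_irrefl _)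
  have hchoice : ∀ i, ∃ B : Finset (EuclideanSpace ℝ (Fin d)), B.card ≤ ns i ∧
      ∫⁻ x, ⨅ a ∈ B, edist x a ^ r ∂μ ≤ quantErr μ r (ns i) + ε := by
    intro i
    have hlt : quantErr μ r (ns i) < quantErr μ r (ns i) + ε :=
      ENNReal.lt_add_right (hQfin i) (by exact_mod_cast hε.ne')
    conv_lhs at hlt => rw [quantErr]
    rw [iInf_lt_iff] at hlt
    obtain ⟨B, hB⟩ := hlt
    rw [iInf_lt_iff] at hB
    obtain ⟨hcard, hlt⟩ := hB
    exact ⟨B, hcard, hlt.le⟩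
  choose B hBcard hBle using hchoice
  have hsum1 : (∑ i, ENNReal.ofReal (p i * c i ^ r)) ≤ 1 := by
    calc (∑ i, ENNReal.ofReal (p i * c i ^ r)) ≤ ∑ i, ENNReal.ofReal (p i) := by
          refine Finset.sum_le_sum fun i _ => ENNReal.ofReal_le_ofReal ?_
          calc p i * c i ^ r ≤ p i * 1 := by
                refine mul_le_mul_of_nonneg_left ?_ (hp i).le
                exact Real.rpow_le_one (hc0 i).le (hc i).le hr.le
            _ = p i := mul_one _
      _ = ENNReal.ofReal (∑ i, p i) :=
          (ENNReal.ofReal_sum_of_nonneg fun i _ => (hp i).le).symm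
      _ = 1 := by rw [hpsum, ENNReal.ofReal_one]
  calc quantErr μ r n ≤ ∑ i, ENNReal.ofReal (p i * c i ^ r) *
        ∫⁻ x, ⨅ a ∈ B i, edist x a ^ r ∂μ := key B hBcard
    _ ≤ ∑ i, ENNReal.ofReal (p i * c i ^ r) * (quantErr μ r (ns i) + ε) :=
        Finset.sum_le_sum fun i _ => mul_le_mul_right (hBle i) _
    _ = (∑ i, ENNReal.ofReal (p i * c i ^ r) * quantErr μ r (ns i)) +
        (∑ i, ENNReal.ofReal (p i * c i ^ r)) * ε := by
        rw [Finset.sum_mul]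
        rw [← Finset.sum_add_distrib]
        exact Finset.sum_congr rfl fun i _ => mul_add _ _ _
    _ ≤ (∑ i, ENNReal.ofReal (p i * c i ^ r) * quantErr μ r (ns i)) + 1 * ε := by
        exact add_le_add_right (mul_le_mul_left hsum1 _) _
    _ = (∑ i, ENNReal.ofReal (p i * c i ^ r) * quantErr μ r (ns i)) + ε := by
        rw [one_mul]
end

section
/- Let W = {ℝ^d; f₁,…,f_N; p₁,…,p_N} be a weighted bi-Lipschitz IFS with s_i‖x−y‖ ≤ ‖f_i(x)−f_i(y)‖ ≤ c_i‖x−y‖, 0 < s_i ≤ c_i < 1, p_i > 0, and invariant measure μ. Let l_r ∈ (0,∞) satisfy Σᵢ (p_i c_iʳ)^{l_r/(r+l_r)} = 1. Then limsup_{n→∞} n·e_{n,r}(μ)^{l_r} < ∞, and consequently the upper quantization dimension satisfies D̄_r(μ) ≤ l_r. -/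
open MeasureTheory Filter

namespace Stmt16Aux

variable {N : ℕ}

/-- product of weights along a word -/
def qprod (qq : Fin N → ℝ) (σ : List (Fin N)) : ℝ := (σ.map qq).prod

lemma qprod_nil (qq : Fin N → ℝ) : qprod qq [] = 1 := rfl

lemma qprod_append (qq : Fin N → ℝ) (σ τ : List (Fin N)) :
    qprod qq (σ ++ τ) = qprod qq σ * qprod qq τ := by
  simp [qprod]

lemma qprod_single (qq : Fin N → ℝ) (i : Fin N) : qprod qq [i] = qq i := by
  simp [qprod]

lemma qprod_pos {qq : Fin N → ℝ} (h : ∀ i, 0 < qq i) (σ : List (Fin N)) :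
    0 < qprod qq σ := by
  apply List.prod_pos
  intro x hx
  rcases List.mem_map.1 hx with ⟨i, -, rfl⟩
  exact h i

/-- The cut-set construction: refine `σ` until `q` drops below `ε`, up to depth `k`. -/
noncomputable def cutF (q : List (Fin N) → ℝ) (ε : ℝ) : ℕ → List (Fin N) → Finset (List (Fin N))
  | 0, σ => {σ}
  | (k+1), σ =>
    if q σ ≤ ε then {σ} else Finset.univ.biUnion fun i : Fin N => cutF q ε k (σ ++ [i])

lemma cutF_zero (q : List (Fin N) → ℝ) (ε : ℝ) (σ : List (Fin N)) :
    cutF q ε 0 σ = {σ} := rfl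

lemma cutF_succ (q : List (Fin N) → ℝ) (ε : ℝ) (k : ℕ) (σ : List (Fin N)) :
    cutF q ε (k+1) σ =
      if q σ ≤ ε then {σ} else Finset.univ.biUnion fun i : Fin N => cutF q ε k (σ ++ [i]) := rfl

lemma prefix_of_mem_cutF {q : List (Fin N) → ℝ} {ε : ℝ} :
    ∀ (k : ℕ) (σ τ : List (Fin N)), τ ∈ cutF q ε k σ → σ <+: τ := by
  intro k
  induction k with
  | zero => intro σ τ h; rw [cutF_zero] at h; simp at h; simp [h]
  | succ k ih =>
    intro σ τ h
    rw [cutF_succ] at h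
    split_ifs at h with h1
    · simp at h; simp [h]
    · simp only [Finset.mem_biUnion, Finset.mem_univ, true_and] at h
      rcases h with ⟨i, hi⟩
      exact ((σ.prefix_append [i]).trans (ih _ _ hi))

lemma cutF_pairwise {q : List (Fin N) → ℝ} {ε : ℝ} (k : ℕ) (σ : List (Fin N)) :
    Set.PairwiseDisjoint (Finset.univ : Finset (Fin N))
      (fun i : Fin N => cutF q ε k (σ ++ [i])) := by
  intro i _ j _ hij
  simp only [Function.onFun, Finset.disjoint_left]
  intro τ hi hj
  rcases prefix_of_mem_cutF k _ _ hi with ⟨t, ht⟩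
  rcases prefix_of_mem_cutF k _ _ hj with ⟨t', ht'⟩
  rw [← ht'] at ht
  simp only [List.append_assoc, List.singleton_append] at ht
  have := List.append_cancel_left ht
  simp at this
  exact hij this.1

lemma cutF_sum {M : Type*} [AddCommMonoid M] {q : List (Fin N) → ℝ} {ε : ℝ}
    (Q : List (Fin N) → M) (hQ : ∀ σ, Q σ = ∑ i : Fin N, Q (σ ++ [i])) :
    ∀ (k : ℕ) (σ : List (Fin N)), ∑ τ ∈ cutF q ε k σ, Q τ = Q σ := by
  intro k
  induction k with
  | zero => intro σ; simp [cutF_zero]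
  | succ k ih =>
    intro σ
    rw [cutF_succ]
    split_ifs with h1
    · simp
    · rw [Finset.sum_biUnion (cutF_pairwise k σ)]
      simp_rw [ih]
      exact (hQ σ).symm

lemma mem_cutF_le {qq : Fin N → ℝ} {ε qmax : ℝ} (hpos : ∀ i, 0 < qq i)
    (hle : ∀ i, qq i ≤ qmax) :
    ∀ (k : ℕ) (σ τ : List (Fin N)), τ ∈ cutF (qprod qq) ε k σ →
      qprod qq τ ≤ ε ∨ qprod qq τ ≤ qprod qq σ * qmax ^ k := by
  intro k
  induction k with
  | zero =>
    intro σ τ h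
    rw [cutF_zero] at h; simp at h
    subst h
    right; simp
  | succ k ih =>
    intro σ τ h
    rw [cutF_succ] at h
    split_ifs at h with h1
    · simp at h; subst h; exact Or.inl h1
    · simp only [Finset.mem_biUnion, Finset.mem_univ, true_and] at h
      rcases h with ⟨i, hi⟩
      rcases ih _ _ hi with h2 | h2
      · exact Or.inl h2
      · right
        rw [qprod_append, qprod_single] at h2
        have hq : 0 < qmax := lt_of_lt_of_le (hpos i) (hle i)
        calc qprod qq τ ≤ qprod qq σ * qq i * qmax ^ k := h2
          _ ≤ qprod qq σ * qmax * qmax ^ k := by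
              exact mul_le_mul_of_nonneg_right
                (mul_le_mul_of_nonneg_left (hle i) (qprod_pos hpos σ).le) (pow_pos hq k).le
          _ = qprod qq σ * qmax ^ (k+1) := by ring

lemma mem_cutF_gt {qq : Fin N → ℝ} {ε qmin : ℝ} (hpos : ∀ i, 0 < qq i)
    (hge : ∀ i, qmin ≤ qq i) (hqmin : 0 < qmin) :
    ∀ (k : ℕ) (σ τ : List (Fin N)), τ ∈ cutF (qprod qq) ε k σ →
      τ = σ ∨ ε * qmin < qprod qq τ := by
  intro k
  induction k with
  | zero => intro σ τ h; rw [cutF_zero] at h; simp at h; exact Or.inl h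
  | succ k ih =>
    intro σ τ h
    rw [cutF_succ] at h
    split_ifs at h with h1
    · simp at h; exact Or.inl h
    · simp only [Finset.mem_biUnion, Finset.mem_univ, true_and] at h
      rcases h with ⟨i, hi⟩
      rcases ih _ _ hi with h2 | h2
      · right
        subst h2
        rw [qprod_append, qprod_single]
        push_neg at h1
        have h3 := hge i
        have h4 := qprod_pos hpos σ
        nlinarith [mul_pos (sub_pos.2 h1) hqmin, mul_le_mul_of_nonneg_left h3 h4.le]
      · exact Or.inr h2

end Stmt16Aux

open Stmt16Aux

/-- `e_{n,r}(μ) = V_{n,r}(μ)^{1/r}`. -/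
noncomputable def quantE {d : ℕ} (μ : Measure (EuclideanSpace ℝ (Fin d)))
    (r : ℝ) (n : ℕ) : ℝ :=
  (quantErr μ r n).toReal ^ (1 / r)

/-- for the invariant measure `μ` of a weighted bi-Lipschitz IFS
(no separation condition needed) and `l_r` with `∑ (pᵢcᵢʳ)^{l_r/(r+l_r)} = 1`,
`limsup_n n·e_{n,r}(μ)^{l_r} < ∞`; consequently the upper quantization
dimension `D̄_r(μ) = limsup (log n)/(-log e_{n,r}(μ))` is at most `l_r`. -/
theorem stmt16 {d N : ℕ}
    (f : Fin N → EuclideanSpace ℝ (Fin d) → EuclideanSpace ℝ (Fin d))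
    (s c p : Fin N → ℝ)
    (hs : ∀ i, 0 < s i) (hsc : ∀ i, s i ≤ c i) (hc : ∀ i, c i < 1)
    (hp : ∀ i, 0 < p i) (hpsum : ∑ i, p i = 1)
    (hbi : ∀ i x y, s i * dist x y ≤ dist (f i x) (f i y) ∧
      dist (f i x) (f i y) ≤ c i * dist x y)
    (μ : Measure (EuclideanSpace ℝ (Fin d))) [IsProbabilityMeasure μ]
    (Ksupp : Set (EuclideanSpace ℝ (Fin d))) (hK : IsCompact Ksupp) (hμK : μ Ksupp = 1)
    (hinv : μ = ∑ i, ENNReal.ofReal (p i) • μ.map (f i))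
    (r : ℝ) (hr : 0 < r)
    (l : ℝ) (hl : 0 < l) (hleq : ∑ i, (p i * c i ^ r) ^ (l / (r + l)) = 1) :
    IsBoundedUnder (· ≤ ·) atTop (fun n : ℕ => (n : ℝ) * quantE μ r n ^ l) ∧
    limsup (fun n : ℕ => Real.log n / (-Real.log (quantE μ r n))) atTop ≤ l := by
  classical
  -- basic positivity facts
  have hc0 : ∀ i, 0 < c i := fun i => lt_of_lt_of_le (hs i) (hsc i)
  have hrl : 0 < r + l := by linarith
  set t : ℝ := l / (r + l) with ht_def
  have ht0 : 0 < t := div_pos hl hrl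
  have ht1 : t < 1 := by
    rw [ht_def, div_lt_one hrl]; linarith
  have h1t : 1 - t = r / (r + l) := by
    rw [ht_def]; field_simp; ring
  -- N is positive
  have hN : 0 < N := by
    rcases Nat.eq_zero_or_pos N with h | h
    · subst h; simp at hpsum
    · exact h
  haveI : NeZero N := ⟨hN.ne'⟩
  haveI : Nonempty (Fin N) := ⟨⟨0, hN⟩⟩
  -- the weights
  set qq : Fin N → ℝ := fun i => p i * c i ^ r with hqq_def
  have hqq0 : ∀ i, 0 < qq i := fun i => mul_pos (hp i) (Real.rpow_pos_of_pos (hc0 i) r)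
  have hp1 : ∀ i, p i ≤ 1 := by
    intro i
    calc p i ≤ ∑ j, p j := Finset.single_le_sum (fun j _ => (hp j).le) (Finset.mem_univ i)
      _ = 1 := hpsum
  have hqq1 : ∀ i, qq i < 1 := by
    intro i
    have h1 : c i ^ r < 1 := Real.rpow_lt_one (hc0 i).le (hc i) hr
    have h2 : 0 < c i ^ r := Real.rpow_pos_of_pos (hc0 i) r
    exact lt_of_le_of_lt (mul_le_of_le_one_left h2.le (hp1 i)) h1
  set qmin : ℝ := Finset.univ.inf' (Finset.univ_nonempty) qq with hqmin_def
  set qmax : ℝ := Finset.univ.sup' (Finset.univ_nonempty) qq with hqmax_def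
  have hqmin0 : 0 < qmin := by
    rw [hqmin_def, Finset.lt_inf'_iff]; exact fun i _ => hqq0 i
  have hqminle : ∀ i, qmin ≤ qq i := fun i => Finset.inf'_le _ (Finset.mem_univ i)
  have hqmaxle : ∀ i, qq i ≤ qmax := fun i => Finset.le_sup' _ (Finset.mem_univ i)
  have hqmax1 : qmax < 1 := by
    rw [hqmax_def, Finset.sup'_lt_iff]; exact fun i _ => hqq1 i
  have hqmax0 : 0 < qmax := lt_of_lt_of_le (hqq0 ⟨0, hN⟩) (hqmaxle _)
  -- hleq in terms of qq
  have hleqt : ∑ i, qq i ^ t = 1 := hleq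
  -- support point and diameter
  have hKne : Ksupp.Nonempty := by
    by_contra h
    rw [Set.not_nonempty_iff_eq_empty] at h
    rw [h] at hμK; simp at hμK
  obtain ⟨x₀, hx₀⟩ := hKne
  set D : ℝ := Metric.diam Ksupp + 1 with hD_def
  have hD0 : 0 < D := by
    have := Metric.diam_nonneg (s := Ksupp); linarith
  have hdistD : ∀ x ∈ Ksupp, dist x x₀ ≤ D := by
    intro x hx
    have := Metric.dist_le_diam_of_mem hK.isBounded hx hx₀
    linarith
  have hKae : ∀ᵐ x ∂μ, x ∈ Ksupp := by
    rw [ae_iff]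
    have : {x | ¬ x ∈ Ksupp} = Ksuppᶜ := rfl
    rw [this, measure_compl hK.isClosed.measurableSet (by finiteness), hμK]
    simp
  -- Lipschitz maps
  have hLip : ∀ i, LipschitzWith (Real.toNNReal (c i)) (f i) := by
    intro i
    apply LipschitzWith.of_dist_le_mul
    intro x y
    rw [Real.coe_toNNReal _ (hc0 i).le]
    exact (hbi i x y).2
  have hfc : ∀ i, Continuous (f i) := fun i => (hLip i).continuous
  have hfm : ∀ i, Measurable (f i) := fun i => (hfc i).measurable
  -- iterated maps
  set fw : List (Fin N) → EuclideanSpace ℝ (Fin d) → EuclideanSpace ℝ (Fin d) :=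
    fun σ => σ.foldr (fun i g => f i ∘ g) id with hfw_def
  have hfw_nil : fw [] = id := rfl
  have hfw_cons : ∀ i σ, fw (i :: σ) = f i ∘ fw σ := fun i σ => rfl
  have hfw_append : ∀ σ i, fw (σ ++ [i]) = fw σ ∘ f i := by
    intro σ i
    induction σ with
    | nil => rfl
    | cons j σ ih => simp only [List.cons_append, hfw_cons, ih]; rfl
  have hfwm : ∀ σ, Measurable (fw σ) := by
    intro σ
    induction σ with
    | nil => exact measurable_id
    | cons j σ ih => rw [hfw_cons]; exact (hfm j).comp ih
  have hfw_dist : ∀ σ (x y : EuclideanSpace ℝ (Fin d)), dist (fw σ x) (fw σ y) ≤ qprod c σ * dist x y := by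
    intro σ
    induction σ with
    | nil => intro x y; simp [hfw_nil, qprod_nil]
    | cons j σ ih =>
      intro x y
      rw [hfw_cons]
      calc dist (f j (fw σ x)) (f j (fw σ y)) ≤ c j * dist (fw σ x) (fw σ y) := (hbi j _ _).2
        _ ≤ c j * (qprod c σ * dist x y) :=
          mul_le_mul_of_nonneg_left (ih x y) (hc0 j).le
        _ = qprod c (j :: σ) * dist x y := by
          simp [qprod]; ring
  -- relation q = pw * cw^r
  have hq_split : ∀ σ, qprod qq σ = qprod p σ * qprod c σ ^ r := by
    intro σ
    induction σ with
    | nil => simp [qprod_nil, Real.one_rpow]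
    | cons j σ ih =>
      have h1 : qprod c (j :: σ) = c j * qprod c σ := by simp [qprod]
      have h2 : qprod p (j :: σ) = p j * qprod p σ := by simp [qprod]
      have h3 : qprod qq (j :: σ) = qq j * qprod qq σ := by simp [qprod]
      have hcpos : (0:ℝ) ≤ qprod c σ := (qprod_pos hc0 σ).le
      rw [h1, h2, h3, ih, Real.mul_rpow (hc0 j).le hcpos, hqq_def]
      ring
  -- the key decomposition of the integral
  have hdecomp : ∀ (g : EuclideanSpace ℝ (Fin d) → ENNReal), Measurable g → ∀ ε L,
      ∫⁻ x, g x ∂μ = ∑ τ ∈ cutF (qprod qq) ε L [],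
        ENNReal.ofReal (qprod p τ) * ∫⁻ x, g (fw τ x) ∂μ := by
    intro g hg ε L
    have hstep : ∀ σ : List (Fin N), ∫⁻ x, g (fw σ x) ∂μ =
        ∑ i, ENNReal.ofReal (p i) * ∫⁻ x, g (fw (σ ++ [i]) x) ∂μ := by
      intro σ
      conv_lhs => rw [hinv]
      rw [lintegral_finset_sum_measure]
      refine Finset.sum_congr rfl fun i _ => ?_
      rw [lintegral_smul_measure, lintegral_map (show Measurable fun x => g (fw σ x) from hg.comp (hfwm σ)) (hfm i)]
      congr 1
      refine lintegral_congr fun x => ?_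
      rw [hfw_append]
      rfl
    have := cutF_sum (q := qprod qq) (ε := ε)
      (fun τ => ENNReal.ofReal (qprod p τ) * ∫⁻ x, g (fw τ x) ∂μ) ?_ L []
    · rw [this]
      simp [qprod_nil, hfw_nil]
    · intro σ
      rw [hstep σ, Finset.mul_sum]
      refine Finset.sum_congr rfl fun i _ => ?_
      rw [qprod_append, qprod_single,
        ENNReal.ofReal_mul (qprod_pos hp σ).le, mul_assoc]
  -- the per-epsilon estimate
  have key : ∀ ε : ℝ, 0 < ε → ε < 1 → ∃ m : ℕ,
      (m : ℝ) * (ε * qmin) ^ t ≤ 1 ∧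
      ∀ n : ℕ, m ≤ n → quantErr μ r n ≤ ENNReal.ofReal (D ^ r * ε ^ (1 - t)) := by
    intro ε hε0 hε1
    obtain ⟨L, hL⟩ := exists_pow_lt_of_lt_one hε0 hqmax1
    set Γ := cutF (qprod qq) ε L [] with hΓ_def
    have hΓle : ∀ τ ∈ Γ, qprod qq τ ≤ ε := by
      intro τ hτ
      rcases mem_cutF_le hqq0 hqmaxle L [] τ hτ with h | h
      · exact h
      · rw [qprod_nil, one_mul] at h; exact h.trans hL.le
    have hΓgt : ∀ τ ∈ Γ, ε * qmin < qprod qq τ := by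
      intro τ hτ
      rcases mem_cutF_gt hqq0 hqminle hqmin0 L [] τ hτ with h | h
      · subst h
        have := hΓle [] hτ
        rw [qprod_nil] at this
        linarith
      · exact h
    have hsum_t : ∑ τ ∈ Γ, (qprod qq τ) ^ t = 1 := by
      have h := cutF_sum (q := qprod qq) (ε := ε) (fun τ => (qprod qq τ) ^ t) ?_ L []
      · rw [hΓ_def, h, qprod_nil, Real.one_rpow]
      · intro σ
        have : ∀ i : Fin N, (qprod qq (σ ++ [i])) ^ t = (qprod qq σ) ^ t * (qq i) ^ t := by
          intro i
          rw [qprod_append, qprod_single,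
            Real.mul_rpow (qprod_pos hqq0 σ).le (hqq0 i).le]
        simp_rw [this]
        rw [← Finset.mul_sum, hleqt, mul_one]
    have hεq0 : 0 < ε * qmin := mul_pos hε0 hqmin0
    have hcard : (Γ.card : ℝ) * (ε * qmin) ^ t ≤ 1 := by
      have h := Finset.card_nsmul_le_sum Γ (fun τ => (qprod qq τ) ^ t) ((ε * qmin) ^ t)
        (fun τ hτ => Real.rpow_le_rpow hεq0.le (hΓgt τ hτ).le ht0.le)
      rw [hsum_t] at h
      rwa [nsmul_eq_mul] at h
    have hsumq : ∑ τ ∈ Γ, qprod qq τ ≤ ε ^ (1 - t) := by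
      have hstep : ∀ τ ∈ Γ, qprod qq τ ≤ (qprod qq τ) ^ t * ε ^ (1 - t) := by
        intro τ hτ
        have hpos := qprod_pos hqq0 τ
        have h1 : qprod qq τ = (qprod qq τ) ^ t * (qprod qq τ) ^ (1 - t) := by
          rw [← Real.rpow_add hpos, add_sub_cancel, Real.rpow_one]
        refine h1.trans_le ?_
        exact mul_le_mul_of_nonneg_left
          (Real.rpow_le_rpow (z := 1 - t) hpos.le (hΓle τ hτ) (by linarith))
          (Real.rpow_nonneg hpos.le t)
      calc ∑ τ ∈ Γ, qprod qq τ ≤ ∑ τ ∈ Γ, (qprod qq τ) ^ t * ε ^ (1 - t) :=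
            Finset.sum_le_sum hstep
        _ = ε ^ (1 - t) := by rw [← Finset.sum_mul, hsum_t, one_mul]
    refine ⟨Γ.card, hcard, ?_⟩
    intro n hn
    set A : Finset (EuclideanSpace ℝ (Fin d)) := Γ.image (fun τ => fw τ x₀) with hA_def
    have hcardA : A.card ≤ n := le_trans (Finset.card_image_le) hn
    set g : EuclideanSpace ℝ (Fin d) → ENNReal := fun x => ⨅ a ∈ A, edist x a ^ r with hg_def
    have hFa : ∀ a : EuclideanSpace ℝ (Fin d), Measurable fun x => edist x a ^ r := fun a =>
      (ENNReal.continuous_rpow_const.comp (continuous_id.edist continuous_const)).measurable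
    have hg : Measurable g := by
      have hgeq : g = fun x => ⨅ a : {a // a ∈ A}, edist x (a : EuclideanSpace ℝ (Fin d)) ^ r := by
        funext x
        exact (iInf_subtype (p := (· ∈ A)) (f := fun a => edist x a.1 ^ r)).symm
      rw [hgeq]
      exact Measurable.iInf fun a => hFa a.1
    have hquant : quantErr μ r n ≤ ∫⁻ x, g x ∂μ := iInf₂_le A hcardA
    have hbound : ∀ τ ∈ Γ, ∫⁻ x, g (fw τ x) ∂μ ≤ ENNReal.ofReal ((qprod c τ * D) ^ r) := by
      intro τ hτ
      have hcw : 0 < qprod c τ := qprod_pos hc0 τ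
      refine le_trans (lintegral_mono_ae (g := fun _ => ENNReal.ofReal ((qprod c τ * D) ^ r)) ?_) ?_
      · filter_upwards [hKae] with x hx
        have hmem : fw τ x₀ ∈ A := Finset.mem_image_of_mem _ hτ
        calc g (fw τ x) ≤ edist (fw τ x) (fw τ x₀) ^ r := biInf_le _ hmem
          _ ≤ ENNReal.ofReal ((qprod c τ * D) ^ r) := by
            rw [edist_dist, ← ENNReal.ofReal_rpow_of_nonneg (by positivity) hr.le]
            refine ENNReal.rpow_le_rpow (ENNReal.ofReal_le_ofReal ?_) hr.le
            calc dist (fw τ x) (fw τ x₀) ≤ qprod c τ * dist x x₀ := hfw_dist τ x x₀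
              _ ≤ qprod c τ * D := mul_le_mul_of_nonneg_left (hdistD x hx) hcw.le
      · rw [lintegral_const, measure_univ, mul_one]
    calc quantErr μ r n ≤ ∫⁻ x, g x ∂μ := hquant
      _ = ∑ τ ∈ Γ, ENNReal.ofReal (qprod p τ) * ∫⁻ x, g (fw τ x) ∂μ := hdecomp g hg ε L
      _ ≤ ∑ τ ∈ Γ, ENNReal.ofReal (qprod p τ) * ENNReal.ofReal ((qprod c τ * D) ^ r) :=
          Finset.sum_le_sum fun τ hτ => mul_le_mul_right (hbound τ hτ) _
      _ = ENNReal.ofReal (∑ τ ∈ Γ, qprod qq τ * D ^ r) := by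
          rw [ENNReal.ofReal_sum_of_nonneg]
          · refine Finset.sum_congr rfl fun τ hτ => ?_
            rw [← ENNReal.ofReal_mul (qprod_pos hp τ).le]
            congr 1
            rw [Real.mul_rpow (qprod_pos hc0 τ).le hD0.le, hq_split τ]
            ring
          · intro τ hτ
            have := qprod_pos hqq0 τ
            positivity
      _ ≤ ENNReal.ofReal (D ^ r * ε ^ (1 - t)) := by
          apply ENNReal.ofReal_le_ofReal
          rw [← Finset.sum_mul, mul_comm]
          exact mul_le_mul_of_nonneg_left hsumq (Real.rpow_nonneg hD0.le r)
  -- the n-wise bound on quantE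
  set C₂ : ℝ := D / qmin ^ (1/(r+l)) with hC2_def
  have hC₂0 : 0 < C₂ := div_pos hD0 (Real.rpow_pos_of_pos hqmin0 _)
  have keyE : ∀ n : ℕ, qmin ^ (-t) < (n:ℝ) → quantE μ r n ≤ C₂ * (n:ℝ) ^ (-(1/l)) := by
    intro n hn
    have hn0 : 0 < (n:ℝ) := lt_trans (Real.rpow_pos_of_pos hqmin0 _) hn
    set ε : ℝ := (n:ℝ) ^ (-(1/t)) / qmin with hε_def
    have hε0 : 0 < ε := div_pos (Real.rpow_pos_of_pos hn0 _) hqmin0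
    have hε1 : ε < 1 := by
      rw [hε_def, div_lt_one hqmin0]
      calc (n:ℝ) ^ (-(1/t)) < (qmin ^ (-t)) ^ (-(1/t)) :=
            Real.rpow_lt_rpow_of_neg (Real.rpow_pos_of_pos hqmin0 _) hn (by rw [neg_lt, neg_zero]; positivity)
        _ = qmin := by
            rw [← Real.rpow_mul hqmin0.le]
            rw [show -t * -(1/t) = 1 by field_simp, Real.rpow_one]
    obtain ⟨m, hm, hbd⟩ := key ε hε0 hε1
    have hεq : ε * qmin = (n:ℝ) ^ (-(1/t)) := div_mul_cancel₀ _ hqmin0.ne'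
    have hnt : ((n:ℝ) ^ (-(1/t))) ^ t = (n:ℝ)⁻¹ := by
      rw [← Real.rpow_mul hn0.le, show -(1/t) * t = -1 by field_simp, Real.rpow_neg_one]
    have hmn : m ≤ n := by
      rw [hεq, hnt] at hm
      have : (m:ℝ) ≤ n := by
        rw [mul_inv_le_iff₀ hn0, one_mul] at hm
        exact hm
      exact_mod_cast this
    have h := hbd n hmn
    have hB0 : (0:ℝ) ≤ D ^ r * ε ^ (1 - t) := by positivity
    have h2 : (quantErr μ r n).toReal ≤ D ^ r * ε ^ (1 - t) :=
      ENNReal.toReal_le_of_le_ofReal hB0 h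
    have h3 : quantE μ r n ≤ (D ^ r * ε ^ (1 - t)) ^ (1/r) :=
      Real.rpow_le_rpow ENNReal.toReal_nonneg h2 (by positivity)
    refine h3.trans_eq ?_
    have e1 : (D ^ r) ^ (1/r) = D := by
      rw [← Real.rpow_mul hD0.le, mul_one_div, div_self hr.ne', Real.rpow_one]
    have e2 : (ε ^ (1 - t)) ^ (1/r) = ε ^ (1/(r+l)) := by
      rw [← Real.rpow_mul hε0.le, h1t]
      congr 1
      field_simp
    have e3 : ε ^ (1/(r+l)) = (n:ℝ) ^ (-(1/l)) / qmin ^ (1/(r+l)) := by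
      rw [hε_def, Real.div_rpow (Real.rpow_nonneg hn0.le _) hqmin0.le,
        ← Real.rpow_mul hn0.le]
      congr 2
      rw [ht_def]
      field_simp
    rw [Real.mul_rpow (by positivity) (by positivity), e1, e2, e3, hC2_def]
    ring
  have hev : ∀ᶠ n : ℕ in atTop, qmin ^ (-t) < (n:ℝ) :=
    (tendsto_natCast_atTop_atTop (R := ℝ)).eventually_gt_atTop _
  have hq0 : ∀ n : ℕ, 0 ≤ quantE μ r n := fun n =>
    Real.rpow_nonneg ENNReal.toReal_nonneg _
  constructor
  · -- part 1
    apply isBoundedUnder_of_eventually_le (a := C₂ ^ l)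
    filter_upwards [hev] with n hn
    have hn0 : 0 < (n:ℝ) := lt_trans (Real.rpow_pos_of_pos hqmin0 _) hn
    have h2 : quantE μ r n ^ l ≤ (C₂ * (n:ℝ) ^ (-(1/l))) ^ l :=
      Real.rpow_le_rpow (hq0 n) (keyE n hn) hl.le
    have h3 : (C₂ * (n:ℝ) ^ (-(1/l))) ^ l = C₂ ^ l * (n:ℝ)⁻¹ := by
      rw [Real.mul_rpow hC₂0.le (Real.rpow_nonneg hn0.le _), ← Real.rpow_mul hn0.le,
        show -(1/l) * l = -1 by field_simp, Real.rpow_neg_one]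
    calc (n:ℝ) * quantE μ r n ^ l ≤ (n:ℝ) * (C₂ ^ l * (n:ℝ)⁻¹) := by
          rw [← h3]; exact mul_le_mul_of_nonneg_left h2 hn0.le
      _ = C₂ ^ l := by field_simp
  · -- part 2
    set a : ℝ := Real.log C₂ with ha_def
    set g : ℕ → ℝ := fun n => Real.log n / ((1/l) * Real.log n - a) with hg_def
    have hglim : Tendsto g atTop (nhds l) := by
      have hlog : Tendsto (fun n : ℕ => Real.log n) atTop atTop :=
        Real.tendsto_log_atTop.comp (tendsto_natCast_atTop_atTop (R := ℝ))
      have hdiv : Tendsto (fun x : ℝ => a / x) atTop (nhds 0) :=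
        Tendsto.const_div_atTop tendsto_id a
      have hinner : Tendsto (fun x : ℝ => (1/l - a / x)) atTop (nhds (1/l)) := by
        simpa using (tendsto_const_nhds (x := 1/l) (f := (atTop : Filter ℝ))).sub hdiv
      have hinv : Tendsto (fun x : ℝ => (1/l - a / x)⁻¹) atTop (nhds l) := by
        simpa [one_div] using hinner.inv₀ (by positivity)
      have heq : ∀ᶠ x : ℝ in atTop, (1/l - a / x)⁻¹ = x / ((1/l) * x - a) := by
        filter_upwards [eventually_gt_atTop (0:ℝ)] with x hx
        have hx' : x ≠ 0 := hx.ne'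
        have h1 : 1/l - a/x = ((1/l) * x - a) / x := by field_simp
        rw [h1, inv_div]
      exact (hinv.congr' heq).comp hlog
    have hbtend : Tendsto (fun n : ℕ => (1/l) * Real.log n - a) atTop atTop := by
      have hlog : Tendsto (fun n : ℕ => Real.log n) atTop atTop :=
        Real.tendsto_log_atTop.comp (tendsto_natCast_atTop_atTop (R := ℝ))
      have h1 : Tendsto (fun n : ℕ => (1/l) * Real.log n) atTop atTop :=
        hlog.const_mul_atTop (by positivity)
      simpa [sub_eq_add_neg] using tendsto_atTop_add_const_right atTop (-a) h1
    have hbev : ∀ᶠ n : ℕ in atTop, 0 < (1/l) * Real.log n - a :=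
      hbtend.eventually_gt_atTop 0
    have hkey2 : ∀ᶠ n : ℕ in atTop,
        0 ≤ Real.log n / (-Real.log (quantE μ r n)) ∧
        Real.log n / (-Real.log (quantE μ r n)) ≤ g n := by
      filter_upwards [hev, hbev, eventually_ge_atTop 1] with n hn hb hn1
      have hn0 : 0 < (n:ℝ) := lt_trans (Real.rpow_pos_of_pos hqmin0 _) hn
      have hn1' : (1:ℝ) ≤ (n:ℝ) := by exact_mod_cast hn1
      have hlogn : 0 ≤ Real.log n := Real.log_nonneg hn1'
      rcases eq_or_lt_of_le (hq0 n) with he | he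
      · rw [← he]
        simp only [Real.log_zero, neg_zero, div_zero]
        exact ⟨le_refl 0, div_nonneg hlogn hb.le⟩
      · have hloge : Real.log (quantE μ r n) ≤ a + (-(1/l)) * Real.log n := by
          calc Real.log (quantE μ r n) ≤ Real.log (C₂ * (n:ℝ) ^ (-(1/l))) :=
                Real.log_le_log he (keyE n hn)
            _ = a + (-(1/l)) * Real.log n := by
                rw [Real.log_mul hC₂0.ne' (Real.rpow_pos_of_pos hn0 _).ne',
                  Real.log_rpow hn0, ha_def]
        have hble : (1/l) * Real.log n - a ≤ -Real.log (quantE μ r n) := by linarith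
        constructor
        · exact div_nonneg hlogn (le_trans hb.le hble)
        · exact div_le_div_of_nonneg_left hlogn hb hble
    calc limsup (fun n : ℕ => Real.log n / (-Real.log (quantE μ r n))) atTop
        ≤ limsup g atTop := by
          exact limsup_le_limsup (hkey2.mono fun n h => h.2)
            (isCoboundedUnder_le_of_eventually_le atTop (hkey2.mono fun n h => h.1))
            hglim.isBoundedUnder_le
      _ = l := hglim.limsup_eq
end
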